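/- arXiv:1902.03355 — 3 statements merged into one kernel-verified Lean document; each statement's English description precedes it below -/
import Mathlib

section
/- In the SFBF setup with uniformly bounded oracle variance, i.e. sup_{x∈ℝ^d} E[‖F(x,ξ) − T(x)‖²]^{1/2} ≤ σ̂, for every solution x* ∈ 𝒳_* and every n ≥ 0, P-almost surely E[‖X_{n+1} − x*‖² | F_n] ≤ ‖X_n − x*‖² − (ρ_n/2)·r_{α_n}(X_n)² + κ_n σ̂²/m_{n+1}, where ρ_n = 1 − 2L²α_n², κ_n = α_n² C₂² (8 + ρ_n), and C₂ is the constant for which the conditional oracle bounds E[‖W_{n+1}‖²|F_n]^{1/2} ≤ C₂σ̂/√(m_{n+1}) and E[‖Z_{n+1}‖²|F̂_n]^{1/2} ≤ C₂σ̂/√(m_{n+1}) hold almost surely. -/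
open MeasureTheory
open scoped RealInnerProductSpace

/-!
Pointwise, the projection inequality at `Y_n`, pseudo-monotonicity of `T` tested against the
solution `x*`, and the Lipschitz bound on `T X_n - T Y_n` give
`‖X_{n+1} - x*‖² ≤ ‖X_n - x*‖² - ρ_n ‖X_n - Y_n‖² + 4α_n² (‖W_{n+1}‖² + ‖Z_{n+1}‖²)
  + 2α_n ⟪x* - Y_n, Z_{n+1}⟫`,
and nonexpansiveness of the projection trades `ρ_n ‖X_n - Y_n‖²` for half the squared residual
at the cost of `ρ_n α_n² ‖W_{n+1}‖²`. Conditioning on `F̂_n` kills the cross term, since `Y_n` is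
`F̂_n`-measurable and `Z_{n+1}` has zero conditional mean; the tower property brings the
remaining bounds down to `F_n`.
-/

section
variable {E : Type*} [NormedAddCommGroup E]

theorem norm_add_sq_le_two_mul (u v : E) : ‖u + v‖ ^ 2 ≤ 2 * ‖u‖ ^ 2 + 2 * ‖v‖ ^ 2 := by
  nlinarith [norm_add_le u v, add_sq_le (a := ‖u‖) (b := ‖v‖), norm_nonneg (u + v)]

theorem norm_sub_sq_le_two_mul (u v : E) : ‖u - v‖ ^ 2 ≤ 2 * ‖u‖ ^ 2 + 2 * ‖v‖ ^ 2 := by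
  simpa [sub_eq_add_neg] using norm_add_sq_le_two_mul u (-v)

theorem continuous_of_norm_sub_le_mul {F : Type*} [NormedAddCommGroup F] {f : E → F} {L : ℝ}
    (h : ∀ x y, ‖f x - f y‖ ≤ L * ‖x - y‖) : Continuous f :=
  (LipschitzWith.of_dist_le' (K := L) (by simpa only [dist_eq_norm] using h)).continuous

end

namespace MeasureTheory

variable {Ω : Type*} {m m₁ m₀ : MeasurableSpace Ω} {μ : Measure Ω}

theorem MemLp.integrable_inner {E : Type*} [NormedAddCommGroup E] [InnerProductSpace ℝ E]
    {f g : Ω → E} (hf : MemLp f 2 μ) (hg : MemLp g 2 μ) :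
    Integrable (fun ω => ⟪f ω, g ω⟫) μ :=
  memLp_one_iff_integrable.1 <| (innerSL ℝ : E →L[ℝ] E →L[ℝ] ℝ).memLp_of_bilin 1 hf hg

theorem condExp_inner_of_stronglyMeasurable_left {E : Type*} [NormedAddCommGroup E]
    [InnerProductSpace ℝ E] [CompleteSpace E] {f g : Ω → E} (hf : StronglyMeasurable[m] f)
    (hfg : Integrable (fun ω => ⟪f ω, g ω⟫) μ) (hg : Integrable g μ) :
    μ[fun ω => ⟪f ω, g ω⟫ | m] =ᵐ[μ] fun ω => ⟪f ω, μ[g | m] ω⟫ :=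
  condExp_bilin_of_stronglyMeasurable_left (innerSL ℝ : E →L[ℝ] E →L[ℝ] ℝ) hf hfg hg

theorem condExp_inner_eq_zero_of_condExp_eq_zero {E : Type*} [NormedAddCommGroup E]
    [InnerProductSpace ℝ E] [CompleteSpace E] {f g : Ω → E} (hf : StronglyMeasurable[m] f)
    (hfg : Integrable (fun ω => ⟪f ω, g ω⟫) μ) (hg : Integrable g μ) (hg0 : μ[g | m] =ᵐ[μ] 0) :
    μ[fun ω => ⟪f ω, g ω⟫ | m] =ᵐ[μ] 0 := by
  filter_upwards [condExp_inner_of_stronglyMeasurable_left hf hfg hg, hg0] with ω hpull hzero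
  rw [hpull, hzero, Pi.zero_apply, inner_zero_right, Pi.zero_apply]

variable {f g : Ω → ℝ} {c d : ℝ}

theorem condExp_const_mul_le {k : ℝ} (hk : 0 ≤ k) (h : μ[f | m] ≤ᵐ[μ] fun _ => c) :
    μ[fun ω => k * f ω | m] ≤ᵐ[μ] fun _ => k * c := by
  filter_upwards [condExp_smul (μ := μ) k f m, h] with ω hω hc
  rw [show (fun ω => k * f ω) = k • f from rfl, hω]
  exact mul_le_mul_of_nonneg_left hc hk

theorem condExp_add_le (hf : Integrable f μ) (hg : Integrable g μ)
    (hfc : μ[f | m] ≤ᵐ[μ] fun _ => c) (hgd : μ[g | m] ≤ᵐ[μ] fun _ => d) :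
    μ[fun ω => f ω + g ω | m] ≤ᵐ[μ] fun _ => c + d := by
  filter_upwards [condExp_add hf hg m, hfc, hgd] with ω hω hc hd
  rw [show (fun ω => f ω + g ω) = f + g from rfl, hω, Pi.add_apply]
  exact add_le_add hc hd

theorem condExp_le_of_condExp_le [IsFiniteMeasure μ] (hm : m ≤ m₁) (hm₁ : m₁ ≤ m₀)
    (h : μ[f | m₁] ≤ᵐ[μ] fun _ => c) : μ[f | m] ≤ᵐ[μ] fun _ => c := by
  filter_upwards [(condExp_condExp_of_le (f := f) hm hm₁).symm,
    condExp_mono (m := m) integrable_condExp (integrable_const c) h] with ω hω hc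
  rw [condExp_const (hm.trans hm₁)] at hc
  rwa [hω]

theorem condExp_le_add_of_le_add [IsFiniteMeasure μ] (hm : m ≤ m₀) {v u : Ω → ℝ}
    (hg : StronglyMeasurable[m] g) (hv : Integrable v μ) (hgi : Integrable g μ)
    (hu : Integrable u μ) (hle : ∀ ω, v ω ≤ g ω + u ω) (huc : μ[u | m] ≤ᵐ[μ] fun _ => c) :
    μ[v | m] ≤ᵐ[μ] fun ω => g ω + c := by
  filter_upwards [condExp_mono (m := m) hv (hgi.add hu) (ae_of_all μ hle),
    condExp_add hgi hu m, huc] with ω hmono hadd hc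
  rw [hadd, Pi.add_apply, condExp_of_stronglyMeasurable hm hg hgi] at hmono
  linarith

end MeasureTheory

section SFBF

variable {E : Type*} [NormedAddCommGroup E] [InnerProductSpace ℝ E]
  {K : Set E} {P T : E → E} {L α : ℝ} {xs : E}

theorem norm_proj_sub_proj_le (hPmem : ∀ x, P x ∈ K)
    (hP : ∀ x, ∀ y ∈ K, ⟪x - P x, y - P x⟫ ≤ 0) (x y : E) : ‖P x - P y‖ ≤ ‖x - y‖ := by
  have hsum := add_nonpos (hP x (P y) (hPmem y)) (hP y (P x) (hPmem x))
  have hsq : ‖P x - P y‖ ^ 2 ≤ ⟪x - y, P x - P y⟫ := by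
    rw [← neg_sub (P x) (P y), inner_neg_right] at hsum
    rw [← real_inner_self_eq_norm_sq]
    simp only [inner_sub_left] at hsum ⊢
    linarith
  have hcs := real_inner_le_norm (x - y) (P x - P y)
  nlinarith [norm_nonneg (P x - P y), norm_nonneg (x - y)]

theorem continuous_proj (hPmem : ∀ x, P x ∈ K)
    (hP : ∀ x, ∀ y ∈ K, ⟪x - P x, y - P x⟫ ≤ 0) : Continuous P :=
  continuous_of_norm_sub_le_mul (L := 1) fun u v => by
    rw [one_mul]; exact norm_proj_sub_proj_le hPmem hP u v

theorem proj_eq_of_forall_inner_le (hPmem : ∀ x, P x ∈ K)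
    (hP : ∀ x, ∀ y ∈ K, ⟪x - P x, y - P x⟫ ≤ 0) {w z : E} (hz : z ∈ K)
    (hwz : ∀ y ∈ K, ⟪w - z, y - z⟫ ≤ 0) : P w = z := by
  have hsum := add_nonpos (hwz (P w) (hPmem w)) (hP w z hz)
  rw [← neg_sub (P w) z, inner_neg_right, ← sub_eq_add_neg, ← inner_sub_left,
    sub_sub_sub_cancel_left, real_inner_self_eq_norm_sq] at hsum
  exact sub_eq_zero.1 (norm_eq_zero.1 (pow_eq_zero_iff two_ne_zero |>.1
    (le_antisymm hsum (sq_nonneg _))))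

theorem proj_sub_smul_eq_of_solution (hPmem : ∀ x, P x ∈ K)
    (hP : ∀ x, ∀ y ∈ K, ⟪x - P x, y - P x⟫ ≤ 0) (hxs : xs ∈ K)
    (hsol : ∀ y ∈ K, 0 ≤ ⟪T xs, y - xs⟫) (hα : 0 ≤ α) : P (xs - α • T xs) = xs := by
  refine proj_eq_of_forall_inner_le hPmem hP hxs fun y hy => ?_
  rw [sub_sub_cancel_left, inner_neg_left, real_inner_smul_left, neg_nonpos]
  exact mul_nonneg hα (hsol y hy)

theorem norm_proj_sub_solution_le (hPmem : ∀ x, P x ∈ K)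
    (hP : ∀ x, ∀ y ∈ K, ⟪x - P x, y - P x⟫ ≤ 0) (hxs : xs ∈ K)
    (hsol : ∀ y ∈ K, 0 ≤ ⟪T xs, y - xs⟫) (hLip : ∀ x y, ‖T x - T y‖ ≤ L * ‖x - y‖)
    (hα : 0 ≤ α) (x a : E) :
    ‖P (x - α • a) - xs‖ ≤ (1 + α * L) * ‖x - xs‖ + α * ‖a - T x‖ := by
  have hsplit : x - α • a - (xs - α • T xs) = (x - xs) - α • (a - T x) - α • (T x - T xs) := by
    simp only [smul_sub]; abel
  calc ‖P (x - α • a) - xs‖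
      = ‖P (x - α • a) - P (xs - α • T xs)‖ := by
        rw [proj_sub_smul_eq_of_solution hPmem hP hxs hsol hα]
    _ ≤ ‖(x - xs) - α • (a - T x) - α • (T x - T xs)‖ := by
        rw [← hsplit]; exact norm_proj_sub_proj_le hPmem hP _ _
    _ ≤ ‖x - xs‖ + α * ‖a - T x‖ + α * ‖T x - T xs‖ := by
        refine (norm_sub_le _ _).trans (add_le_add ((norm_sub_le _ _).trans_eq ?_) ?_) <;>
          rw [norm_smul, Real.norm_of_nonneg hα]
    _ ≤ (1 + α * L) * ‖x - xs‖ + α * ‖a - T x‖ := by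
        linarith [mul_le_mul_of_nonneg_left (hLip x xs) hα]

theorem memLp_proj_sub_solution {Ω : Type*} [MeasurableSpace Ω] {μ : Measure Ω}
    (hPmem : ∀ x, P x ∈ K) (hP : ∀ x, ∀ y ∈ K, ⟪x - P x, y - P x⟫ ≤ 0) (hxs : xs ∈ K)
    (hsol : ∀ y ∈ K, 0 ≤ ⟪T xs, y - xs⟫) (hLip : ∀ x y, ‖T x - T y‖ ≤ L * ‖x - y‖)
    (hα : 0 ≤ α) {x a y : Ω → E} (hy : AEStronglyMeasurable y μ)
    (hyx : ∀ ω, y ω = P (x ω - α • a ω)) (hx : MemLp (fun ω => x ω - xs) 2 μ)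
    (ha : MemLp (fun ω => a ω - T (x ω)) 2 μ) : MemLp (fun ω => xs - y ω) 2 μ :=
  ((hx.norm.const_mul (1 + α * L)).add (ha.norm.const_mul α)).mono'
    (aestronglyMeasurable_const.sub hy) (ae_of_all _ fun ω => by
      rw [norm_sub_rev, hyx]; exact norm_proj_sub_solution_le hPmem hP hxs hsol hLip hα _ _)

theorem integrable_sq_norm_sub_proj {Ω : Type*} [MeasurableSpace Ω] {μ : Measure Ω}
    (hPmem : ∀ x, P x ∈ K) (hP : ∀ x, ∀ y ∈ K, ⟪x - P x, y - P x⟫ ≤ 0) (hxs : xs ∈ K)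
    (hsol : ∀ y ∈ K, 0 ≤ ⟪T xs, y - xs⟫) (hLip : ∀ x y, ‖T x - T y‖ ≤ L * ‖x - y‖)
    (hα : 0 ≤ α) {x : Ω → E} (hx : AEStronglyMeasurable x μ)
    (hx2 : Integrable (fun ω => ‖x ω - xs‖ ^ 2) μ) :
    Integrable (fun ω => ‖x ω - P (x ω - α • T (x ω))‖ ^ 2) μ := by
  have hTc : Continuous T := continuous_of_norm_sub_le_mul hLip
  have hPc : Continuous P := continuous_proj hPmem hP
  have hX : MemLp (fun ω => x ω - xs) 2 μ :=
    (memLp_two_iff_integrable_sq_norm (hx.sub aestronglyMeasurable_const)).2 hx2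
  have hp := memLp_proj_sub_solution hPmem hP hxs hsol hLip hα
    ((by fun_prop : Continuous fun v => P (v - α • T v)).comp_aestronglyMeasurable hx)
    (fun _ => rfl) hX (a := fun ω => T (x ω)) (by simpa only [sub_self] using MemLp.zero')
  simpa only [Pi.add_apply, sub_add_sub_cancel] using
    (memLp_two_iff_integrable_sq_norm (hX.add hp).1).1 (hX.add hp)

theorem norm_sub_proj_le (hPmem : ∀ x, P x ∈ K)
    (hP : ∀ x, ∀ y ∈ K, ⟪x - P x, y - P x⟫ ≤ 0) (hα : 0 ≤ α) (x a t : E) :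
    ‖x - P (x - α • t)‖ ≤ ‖x - P (x - α • a)‖ + α * ‖a - t‖ := by
  calc ‖x - P (x - α • t)‖ ≤ ‖x - P (x - α • a)‖ + ‖P (x - α • a) - P (x - α • t)‖ :=
        norm_sub_le_norm_sub_add_norm_sub _ _ _
    _ ≤ ‖x - P (x - α • a)‖ + ‖(x - α • a) - (x - α • t)‖ := by
        gcongr; exact norm_proj_sub_proj_le hPmem hP _ _
    _ = ‖x - P (x - α • a)‖ + α * ‖a - t‖ := by
        rw [sub_sub_sub_cancel_left, ← smul_sub, norm_smul, Real.norm_of_nonneg hα,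
          norm_sub_rev t a]

theorem norm_fbf_step_sub_sq_le {x y xs a b tx ty : E}
    (hproj : ⟪x - α • a - y, xs - y⟫ ≤ 0) (hpm : 0 ≤ ⟪ty, y - xs⟫)
    (hlip : ‖tx - ty‖ ≤ L * ‖x - y‖) (hα : 0 ≤ α) :
    ‖y + α • (a - b) - xs‖ ^ 2 ≤ ‖x - xs‖ ^ 2 - (1 - 2 * L ^ 2 * α ^ 2) * ‖x - y‖ ^ 2
      + 4 * α ^ 2 * ‖a - tx‖ ^ 2 + 4 * α ^ 2 * ‖b - ty‖ ^ 2 + 2 * α * ⟪xs - y, b - ty⟫ := by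
  have hneg : y - xs = -(xs - y) := (neg_sub _ _).symm
  have hnew : ‖y + α • (a - b) - xs‖ ^ 2
      = ‖y - xs‖ ^ 2 - 2 * α * ⟪a - b, xs - y⟫ + α ^ 2 * ‖a - b‖ ^ 2 := by
    rw [add_sub_right_comm, norm_add_sq_real, norm_smul, Real.norm_eq_abs, mul_pow, sq_abs,
      real_inner_smul_right, real_inner_comm, hneg, inner_neg_right]
    ring
  have hold : ‖x - xs‖ ^ 2 = ‖x - y‖ ^ 2 - 2 * ⟪x - y, xs - y⟫ + ‖y - xs‖ ^ 2 := by
    rw [← sub_sub_sub_cancel_right x xs y, norm_sub_sq_real, norm_sub_rev xs]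
  have hcross : ⟪x - y, xs - y⟫ - α * ⟪a - b, xs - y⟫
      = ⟪x - α • a - y, xs - y⟫ - α * ⟪ty, y - xs⟫ + α * ⟪xs - y, b - ty⟫ := by
    rw [hneg, inner_neg_right, ← real_inner_comm (xs - y) (b - ty)]
    simp only [inner_sub_left, real_inner_smul_left]
    ring
  have hdiff : ‖a - b‖ ^ 2 ≤ 2 * L ^ 2 * ‖x - y‖ ^ 2 + 4 * ‖a - tx‖ ^ 2 + 4 * ‖b - ty‖ ^ 2 := by
    have hsplit : a - b = (tx - ty) + ((a - tx) - (b - ty)) := by abel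
    have hT : ‖tx - ty‖ ^ 2 ≤ L ^ 2 * ‖x - y‖ ^ 2 := by
      rw [← mul_pow]; exact pow_le_pow_left₀ (norm_nonneg _) hlip 2
    rw [hsplit]
    linarith [norm_add_sq_le_two_mul (tx - ty) ((a - tx) - (b - ty)),
      norm_sub_sq_le_two_mul (a - tx) (b - ty)]
  linarith [mul_le_mul_of_nonneg_left hdiff (sq_nonneg α), mul_nonneg hα hpm]

theorem norm_fbf_step_sub_sq_le_of_proj (hPmem : ∀ x, P x ∈ K)
    (hP : ∀ x, ∀ y ∈ K, ⟪x - P x, y - P x⟫ ≤ 0) (hxs : xs ∈ K)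
    (hsol : ∀ y ∈ K, 0 ≤ ⟪T xs, y - xs⟫) (hpm : ∀ x y, 0 ≤ ⟪T x, y - x⟫ → 0 ≤ ⟪T y, y - x⟫)
    (hLip : ∀ x y, ‖T x - T y‖ ≤ L * ‖x - y‖) (hα : 0 ≤ α) (hαL : 2 * L ^ 2 * α ^ 2 ≤ 1)
    {x y a b : E} (hy : y = P (x - α • a)) :
    ‖y + α • (a - b) - xs‖ ^ 2 ≤ ‖x - xs‖ ^ 2
      - ((1 - 2 * L ^ 2 * α ^ 2) / 2) * ‖x - P (x - α • T x)‖ ^ 2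
      + (4 + (1 - 2 * L ^ 2 * α ^ 2)) * α ^ 2 * ‖a - T x‖ ^ 2 + 4 * α ^ 2 * ‖b - T y‖ ^ 2
      + 2 * α * ⟪xs - y, b - T y⟫ := by
  have hyK : y ∈ K := hy ▸ hPmem _
  have hstep := norm_fbf_step_sub_sq_le (b := b) (hy ▸ hP _ xs hxs) (hpm xs y (hsol y hyK))
    (hLip x y) hα
  have hres : ‖x - P (x - α • T x)‖ ^ 2 ≤ 2 * ‖x - y‖ ^ 2 + 2 * α ^ 2 * ‖a - T x‖ ^ 2 := by
    have h := norm_sub_proj_le hPmem hP hα x a (T x)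
    rw [← hy] at h
    nlinarith [add_sq_le (a := ‖x - y‖) (b := α * ‖a - T x‖), norm_nonneg (x - P (x - α • T x))]
  linarith [mul_le_mul_of_nonneg_left hres (by linarith : 0 ≤ (1 - 2 * L ^ 2 * α ^ 2) / 2)]

theorem condExp_norm_sfbf_step_sub_sq_le [CompleteSpace E] {Ω : Type*}
    {m m₁ m₀ : MeasurableSpace Ω} {μ : Measure Ω} [IsFiniteMeasure μ]
    (hm : m ≤ m₁) (hm₁ : m₁ ≤ m₀) (hPmem : ∀ x, P x ∈ K)
    (hP : ∀ x, ∀ y ∈ K, ⟪x - P x, y - P x⟫ ≤ 0) (hxs : xs ∈ K)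
    (hsol : ∀ y ∈ K, 0 ≤ ⟪T xs, y - xs⟫) (hpm : ∀ x y, 0 ≤ ⟪T x, y - x⟫ → 0 ≤ ⟪T y, y - x⟫)
    (hLip : ∀ x y, ‖T x - T y‖ ≤ L * ‖x - y‖) (hα : 0 ≤ α) (hαL : 2 * L ^ 2 * α ^ 2 ≤ 1)
    {x y a b x' : Ω → E} (hx : StronglyMeasurable[m] x) (hy : StronglyMeasurable[m₁] y)
    (ha : AEStronglyMeasurable a μ) (hb : AEStronglyMeasurable b μ)
    (hyx : ∀ ω, y ω = P (x ω - α • a ω)) (hx' : ∀ ω, x' ω = y ω + α • (a ω - b ω))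
    (hx2 : Integrable (fun ω => ‖x ω - xs‖ ^ 2) μ) (hx'2 : Integrable (fun ω => ‖x' ω - xs‖ ^ 2) μ)
    (hw2 : Integrable (fun ω => ‖a ω - T (x ω)‖ ^ 2) μ)
    (hz2 : Integrable (fun ω => ‖b ω - T (y ω)‖ ^ 2) μ)
    (hz0 : μ[fun ω => b ω - T (y ω) | m₁] =ᵐ[μ] 0) {c : ℝ}
    (hwc : μ[fun ω => ‖a ω - T (x ω)‖ ^ 2 | m] ≤ᵐ[μ] fun _ => c)
    (hzc : μ[fun ω => ‖b ω - T (y ω)‖ ^ 2 | m₁] ≤ᵐ[μ] fun _ => c) :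
    μ[fun ω => ‖x' ω - xs‖ ^ 2 | m] ≤ᵐ[μ] fun ω => ‖x ω - xs‖ ^ 2
      - ((1 - 2 * L ^ 2 * α ^ 2) / 2) * ‖x ω - P (x ω - α • T (x ω))‖ ^ 2
      + α ^ 2 * (8 + (1 - 2 * L ^ 2 * α ^ 2)) * c := by
  set ρ := 1 - 2 * L ^ 2 * α ^ 2
  have hTc : Continuous T := continuous_of_norm_sub_le_mul hLip
  have hPc : Continuous P := continuous_proj hPmem hP
  have hxμ : AEStronglyMeasurable x μ := (hx.mono (hm.trans hm₁)).aestronglyMeasurable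
  have hyμ : AEStronglyMeasurable y μ := (hy.mono hm₁).aestronglyMeasurable
  have hX : MemLp (fun ω => x ω - xs) 2 μ :=
    (memLp_two_iff_integrable_sq_norm (hxμ.sub aestronglyMeasurable_const)).2 hx2
  have hW : MemLp (fun ω => a ω - T (x ω)) 2 μ :=
    (memLp_two_iff_integrable_sq_norm (ha.sub (hTc.comp_aestronglyMeasurable hxμ))).2 hw2
  have hZ : MemLp (fun ω => b ω - T (y ω)) 2 μ :=
    (memLp_two_iff_integrable_sq_norm (hb.sub (hTc.comp_aestronglyMeasurable hyμ))).2 hz2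
  have hY : MemLp (fun ω => xs - y ω) 2 μ :=
    memLp_proj_sub_solution hPmem hP hxs hsol hLip hα hyμ hyx hX hW
  have hip : Integrable (fun ω => ⟪xs - y ω, b ω - T (y ω)⟫) μ := hY.integrable_inner hZ
  have hip0 : μ[fun ω => ⟪xs - y ω, b ω - T (y ω)⟫ | m₁] ≤ᵐ[μ] fun _ => 0 :=
    (condExp_inner_eq_zero_of_condExp_eq_zero (stronglyMeasurable_const.sub hy) hip
      (hZ.integrable one_le_two) hz0).le
  have hZbound : μ[fun ω => 4 * α ^ 2 * ‖b ω - T (y ω)‖ ^ 2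
      + 2 * α * ⟪xs - y ω, b ω - T (y ω)⟫ | m₁] ≤ᵐ[μ] fun _ => 4 * α ^ 2 * c + 2 * α * 0 :=
    condExp_add_le (hz2.const_mul _) (hip.const_mul _)
      (condExp_const_mul_le (by positivity) hzc) (condExp_const_mul_le (by positivity) hip0)
  have hbound : μ[fun ω => (4 + ρ) * α ^ 2 * ‖a ω - T (x ω)‖ ^ 2
      + (4 * α ^ 2 * ‖b ω - T (y ω)‖ ^ 2 + 2 * α * ⟪xs - y ω, b ω - T (y ω)⟫) | m]
      ≤ᵐ[μ] fun _ => (4 + ρ) * α ^ 2 * c + (4 * α ^ 2 * c + 2 * α * 0) :=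
    condExp_add_le (hw2.const_mul _) ((hz2.const_mul _).add (hip.const_mul _))
      (condExp_const_mul_le (by nlinarith) hwc) (condExp_le_of_condExp_le hm hm₁ hZbound)
  have hG : StronglyMeasurable[m] fun ω =>
      ‖x ω - xs‖ ^ 2 - (ρ / 2) * ‖x ω - P (x ω - α • T (x ω))‖ ^ 2 := by
    have : Continuous fun v => ‖v - xs‖ ^ 2 - (ρ / 2) * ‖v - P (v - α • T v)‖ ^ 2 := by fun_prop
    exact this.comp_stronglyMeasurable hx
  have hU : Integrable (fun ω => (4 + ρ) * α ^ 2 * ‖a ω - T (x ω)‖ ^ 2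
      + (4 * α ^ 2 * ‖b ω - T (y ω)‖ ^ 2 + 2 * α * ⟪xs - y ω, b ω - T (y ω)⟫)) μ :=
    (hw2.const_mul _).add ((hz2.const_mul _).add (hip.const_mul _))
  have hR := integrable_sq_norm_sub_proj hPmem hP hxs hsol hLip hα hxμ hx2
  filter_upwards [condExp_le_add_of_le_add (hm.trans hm₁) hG hx'2 (hx2.sub (hR.const_mul _)) hU
    (fun ω => by
      rw [hx' ω]
      linarith [norm_fbf_step_sub_sq_le_of_proj (b := b ω) hPmem hP hxs hsol hpm hLip hα hαL
        (hyx ω)])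
    hbound] with ω h
  linarith

end SFBF

theorem stmt_11_general {d : ℕ} {Ω : Type*} [mΩ : MeasurableSpace Ω]
    (μ : Measure Ω) [IsProbabilityMeasure μ]
    (𝒳 : Set (EuclideanSpace ℝ (Fin d)))
    (proj : EuclideanSpace ℝ (Fin d) → EuclideanSpace ℝ (Fin d))
    (hproj_mem : ∀ x, proj x ∈ 𝒳)
    (hproj_char : ∀ x, ∀ y ∈ 𝒳, ⟪x - proj x, y - proj x⟫ ≤ 0)
    (T : EuclideanSpace ℝ (Fin d) → EuclideanSpace ℝ (Fin d))
    (L : ℝ) (hL : 0 < L)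
    (hLip : ∀ x y, ‖T x - T y‖ ≤ L * ‖x - y‖)
    (hpm : ∀ x y, 0 ≤ ⟪T x, y - x⟫ → 0 ≤ ⟪T y, y - x⟫)
    (xs : EuclideanSpace ℝ (Fin d)) (hxs_mem : xs ∈ 𝒳)
    (hxs_sol : ∀ y ∈ 𝒳, 0 ≤ ⟪T xs, y - xs⟫)
    (σhat : ℝ)
    -- step sizes and batch sizes
    (α : ℕ → ℝ) (hα : ∀ n, 0 < α n) (hαL : ∀ n, Real.sqrt 2 * L * α n < 1)
    (mb : ℕ → ℕ)
    -- filtrations and adapted processes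
    (𝓕 𝓕hat : ℕ → MeasurableSpace Ω)
    (h𝓕le : ∀ n, 𝓕 n ≤ 𝓕hat n)
    (h𝓕Ω : ∀ n, 𝓕hat n ≤ mΩ)
    (X Y A B : ℕ → Ω → EuclideanSpace ℝ (Fin d))
    (hXad : ∀ n, StronglyMeasurable[𝓕 n] (X n))
    (hYad : ∀ n, StronglyMeasurable[𝓕hat n] (Y n))
    -- the SFBF recursion
    (hY : ∀ n ω, Y n ω = proj (X n ω - α n • A n ω))
    (hX : ∀ n ω, X (n + 1) ω = Y n ω + α n • (A n ω - B n ω))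
    -- integrability
    (hXint : ∀ n, Integrable (fun ω => ‖X n ω - xs‖ ^ 2) μ)
    (hWint : ∀ n, Integrable (fun ω => ‖A n ω - T (X n ω)‖ ^ 2) μ)
    (hZint : ∀ n, Integrable (fun ω => ‖B n ω - T (Y n ω)‖ ^ 2) μ)
    (hAint : ∀ n, Integrable (A n) μ) (hBint : ∀ n, Integrable (B n) μ)
    -- the oracle errors have zero conditional mean
    (hZ0 : ∀ n, condExp (𝓕hat n) μ (fun ω => B n ω - T (Y n ω)) =ᵐ[μ] 0)
    -- the conditional second-moment oracle bounds, with constant `C₂`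
    (C₂ : ℝ)
    (hWbd : ∀ n, ∀ᵐ ω ∂μ,
      (condExp (𝓕 n) μ (fun ω' => ‖A n ω' - T (X n ω')‖ ^ 2) ω) ^ ((1 : ℝ) / 2)
        ≤ C₂ * σhat / Real.sqrt (mb (n + 1)))
    (hZbd : ∀ n, ∀ᵐ ω ∂μ,
      (condExp (𝓕hat n) μ (fun ω' => ‖B n ω' - T (Y n ω')‖ ^ 2) ω) ^ ((1 : ℝ) / 2)
        ≤ C₂ * σhat / Real.sqrt (mb (n + 1))) :
    ∀ n, ∀ᵐ ω ∂μ,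
      condExp (𝓕 n) μ (fun ω' => ‖X (n + 1) ω' - xs‖ ^ 2) ω
        ≤ ‖X n ω - xs‖ ^ 2
          - ((1 - 2 * L ^ 2 * (α n) ^ 2) / 2) *
              ‖X n ω - proj (X n ω - α n • T (X n ω))‖ ^ 2
          + ((α n) ^ 2 * C₂ ^ 2 * (8 + (1 - 2 * L ^ 2 * (α n) ^ 2)) * σhat ^ 2)
              / (mb (n + 1)) := by
  intro n
  have hαL' : 2 * L ^ 2 * α n ^ 2 ≤ 1 := by
    have h0 : 0 ≤ Real.sqrt 2 * L * α n := by have := hα n; positivity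
    nlinarith [hαL n, Real.sq_sqrt (zero_le_two : (0 : ℝ) ≤ 2)]
  have hsq (t : ℝ) (ht : t ^ ((1 : ℝ) / 2) ≤ C₂ * σhat / Real.sqrt (mb (n + 1))) :
      t ≤ C₂ ^ 2 * σhat ^ 2 / mb (n + 1) := by
    rw [← Real.sqrt_eq_rpow] at ht
    refine (Real.sqrt_le_iff.1 ht).2.trans_eq ?_
    rw [div_pow, mul_pow, Real.sq_sqrt (Nat.cast_nonneg _)]
  filter_upwards [condExp_norm_sfbf_step_sub_sq_le (h𝓕le n) (h𝓕Ω n) hproj_mem hproj_char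
    hxs_mem hxs_sol hpm hLip (hα n).le hαL' (hXad n) (hYad n) (hAint n).1 (hBint n).1 (hY n)
    (hX n) (hXint n) (hXint (n + 1)) (hWint n) (hZint n) (hZ0 n)
    ((hWbd n).mono fun _ => hsq _) ((hZbd n).mono fun _ => hsq _)] with ω h
  exact h.trans_eq (by ring)

/-- The stochastic quasi-Fejér inequality for the SFBF iterates under uniformly bounded
oracle variance: `E[‖X_{n+1} − x*‖² | F_n] ≤ ‖X_n − x*‖² − (ρ_n/2)r_{α_n}(X_n)²
  + κ_n σ̂²/m_{n+1}` a.s., with `κ_n = α_n² C₂² (8 + ρ_n)`. -/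
theorem stmt_11 {d : ℕ} {Ω Ξ : Type*} [mΩ : MeasurableSpace Ω] [mΞ : MeasurableSpace Ξ]
    (μ : Measure Ω) [IsProbabilityMeasure μ]
    (P : Measure Ξ) [IsProbabilityMeasure P]
    (𝒳 : Set (EuclideanSpace ℝ (Fin d)))
    (h𝒳ne : 𝒳.Nonempty) (h𝒳cl : IsClosed 𝒳) (h𝒳cv : Convex ℝ 𝒳)
    (proj : EuclideanSpace ℝ (Fin d) → EuclideanSpace ℝ (Fin d))
    (hproj_mem : ∀ x, proj x ∈ 𝒳)
    (hproj_char : ∀ x, ∀ y ∈ 𝒳, ⟪x - proj x, y - proj x⟫ ≤ 0)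
    (F : EuclideanSpace ℝ (Fin d) → Ξ → EuclideanSpace ℝ (Fin d))
    (hFmeas : ∀ x, Measurable (F x))
    (T : EuclideanSpace ℝ (Fin d) → EuclideanSpace ℝ (Fin d))
    (hT : ∀ x, T x = ∫ z, F x z ∂P)
    (hTint : ∀ x, Integrable (fun z => F x z) P)
    (L : ℝ) (hL : 0 < L)
    (hLip : ∀ x y, ‖T x - T y‖ ≤ L * ‖x - y‖)
    (hpm : ∀ x y, 0 ≤ ⟪T x, y - x⟫ → 0 ≤ ⟪T y, y - x⟫)
    (xs : EuclideanSpace ℝ (Fin d)) (hxs_mem : xs ∈ 𝒳)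
    (hxs_sol : ∀ y ∈ 𝒳, 0 ≤ ⟪T xs, y - xs⟫)
    -- uniformly bounded oracle variance
    (σhat : ℝ) (hσhat : 0 ≤ σhat)
    (hUBV : ∀ x, (∫ z, ‖F x z - T x‖ ^ 2 ∂P) ^ ((1 : ℝ) / 2) ≤ σhat)
    -- step sizes and batch sizes
    (α : ℕ → ℝ) (hα : ∀ n, 0 < α n) (hαL : ∀ n, Real.sqrt 2 * L * α n < 1)
    (mb : ℕ → ℕ) (hmb : ∀ n, 1 ≤ mb n)
    -- filtrations and adapted processes
    (𝓕 𝓕hat : ℕ → MeasurableSpace Ω)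
    (h𝓕le : ∀ n, 𝓕 n ≤ 𝓕hat n) (h𝓕hatle : ∀ n, 𝓕hat n ≤ 𝓕 (n + 1))
    (h𝓕Ω : ∀ n, 𝓕hat n ≤ mΩ)
    (X Y A B : ℕ → Ω → EuclideanSpace ℝ (Fin d))
    (hXad : ∀ n, StronglyMeasurable[𝓕 n] (X n))
    (hAad : ∀ n, StronglyMeasurable[𝓕hat n] (A n))
    (hYad : ∀ n, StronglyMeasurable[𝓕hat n] (Y n))
    (hBad : ∀ n, StronglyMeasurable[𝓕 (n + 1)] (B n))
    -- the SFBF recursion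
    (hY : ∀ n ω, Y n ω = proj (X n ω - α n • A n ω))
    (hX : ∀ n ω, X (n + 1) ω = Y n ω + α n • (A n ω - B n ω))
    -- integrability
    (hXint : ∀ n, Integrable (fun ω => ‖X n ω - xs‖ ^ 2) μ)
    (hWint : ∀ n, Integrable (fun ω => ‖A n ω - T (X n ω)‖ ^ 2) μ)
    (hZint : ∀ n, Integrable (fun ω => ‖B n ω - T (Y n ω)‖ ^ 2) μ)
    (hAint : ∀ n, Integrable (A n) μ) (hBint : ∀ n, Integrable (B n) μ)
    (hTXint : ∀ n, Integrable (fun ω => T (X n ω)) μ)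
    (hTYint : ∀ n, Integrable (fun ω => T (Y n ω)) μ)
    -- the oracle errors have zero conditional mean
    (hW0 : ∀ n, condExp (𝓕 n) μ (fun ω => A n ω - T (X n ω)) =ᵐ[μ] 0)
    (hZ0 : ∀ n, condExp (𝓕hat n) μ (fun ω => B n ω - T (Y n ω)) =ᵐ[μ] 0)
    -- the conditional second-moment oracle bounds, with constant `C₂`
    (C₂ : ℝ) (hC₂ : 0 < C₂)
    (hWbd : ∀ n, ∀ᵐ ω ∂μ,
      (condExp (𝓕 n) μ (fun ω' => ‖A n ω' - T (X n ω')‖ ^ 2) ω) ^ ((1 : ℝ) / 2)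
        ≤ C₂ * σhat / Real.sqrt (mb (n + 1)))
    (hZbd : ∀ n, ∀ᵐ ω ∂μ,
      (condExp (𝓕hat n) μ (fun ω' => ‖B n ω' - T (Y n ω')‖ ^ 2) ω) ^ ((1 : ℝ) / 2)
        ≤ C₂ * σhat / Real.sqrt (mb (n + 1))) :
    ∀ n, ∀ᵐ ω ∂μ,
      condExp (𝓕 n) μ (fun ω' => ‖X (n + 1) ω' - xs‖ ^ 2) ω
        ≤ ‖X n ω - xs‖ ^ 2
          - ((1 - 2 * L ^ 2 * (α n) ^ 2) / 2) *
              ‖X n ω - proj (X n ω - α n • T (X n ω))‖ ^ 2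
          + ((α n) ^ 2 * C₂ ^ 2 * (8 + (1 - 2 * L ^ 2 * (α n) ^ 2)) * σhat ^ 2)
              / (mb (n + 1)) :=
  stmt_11_general (mΩ := mΩ) μ 𝒳 proj hproj_mem hproj_char T L hL hLip hpm xs hxs_mem hxs_sol σhat α
    hα hαL mb 𝓕 𝓕hat h𝓕le h𝓕Ω X Y A B hXad hYad hY hX hXint hWint hZint hAint hBint hZ0 C₂ hWbd hZbd
end

section
/- In the SFBF setup, let σ̂(x*) := max{σ(x*), σ₀} for x* ∈ 𝒳_*, and dist(x, 𝒳_*) := ‖Π_{𝒳_*}(x) − x‖. Then for every n ≥ 0, P-almost surely E[dist(X_{n+1}, 𝒳_*)² | F_n] ≤ dist(X_n, 𝒳_*)² − (ρ_n/2)·r_{α_n}(X_n)² + (κ_n σ̂(Π_{𝒳_*}(X_n))²/m_{n+1})·(1 + dist(X_n, 𝒳_*)²), where ρ_n = 1 − 2L²α_n² and κ_n = α_n² C₂² [2(4+ρ_n) + 16(1 + α_n L + α_n σ₀ C₂/√(m_{n+1}))²]. -/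
/-!
Put `x* = Π_{𝒳_*}(X_n)`. Since `x*` solves the variational inequality and `T` is
pseudo-monotone, `⟪T Y_n, x* - Y_n⟫ ≤ 0`; with the projection inequality at `Y_n` and the
Lipschitz bound on `T` this gives the deterministic forward-backward-forward estimate
`‖X_{n+1} - x*‖² ≤ ‖X_n - x*‖² - (ρ_n/2) r(X_n)² + (4 + ρ_n) α_n² ‖W‖² + 4 α_n² ‖Z‖²
  + 2 α_n ⟪Z, x* - Y_n⟫`,
`W`, `Z` being the two oracle errors. Conditioning on `F_n` removes the cross term, because
`x* - Y_n` is `F̂_n`-measurable and `Z` has zero `F̂_n`-conditional mean, and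
`dist(X_{n+1}, 𝒳_*) ≤ ‖X_{n+1} - x*‖`.

The oracle bounds are assumed almost surely for each fixed solution, with a null set depending on
the solution, but they are needed at the random solution `x*`. Replacing `c σ(x)` by the essential
supremum over `ω` of the slack `√E[‖·‖² | F](ω) - c σ₀ ‖K ω - x‖` yields a `c σ₀`-Lipschitz
envelope `θ ≤ c σ` for which the bound holds almost surely for all `x` at once. For `Z` one also
uses `‖Y_n - x*‖ ≤ (1 + α_n L) ‖X_n - x*‖ + α_n ‖W‖` and the tower property.
-/

open MeasureTheory
open scoped RealInnerProductSpace ENNReal NNReal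

section Projection

variable {E : Type*} [NormedAddCommGroup E] [InnerProductSpace ℝ E]

theorem norm_sub_sq_le_inner_of_inner_le {u v p q : E} (hp : ⟪u - p, q - p⟫ ≤ 0)
    (hq : ⟪v - q, p - q⟫ ≤ 0) : ‖p - q‖ ^ 2 ≤ ⟪u - v, p - q⟫ := by
  have : ⟪u - v, p - q⟫ - ‖p - q‖ ^ 2 = -⟪u - p, q - p⟫ - ⟪v - q, p - q⟫ := by
    rw [← real_inner_self_eq_norm_sq, ← neg_sub p q, inner_neg_right, ← inner_sub_left]
    simp only [inner_sub_left]
    ring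
  linarith

structure IsMetricProj (S : Set E) (Q : E → E) : Prop where
  mem : ∀ x, Q x ∈ S
  inner_le : ∀ x, ∀ y ∈ S, ⟪x - Q x, y - Q x⟫ ≤ 0

namespace IsMetricProj

variable {S : Set E} {Q : E → E}

theorem norm_sub_le (hQ : IsMetricProj S Q) (u v : E) : ‖Q u - Q v‖ ≤ ‖u - v‖ := by
  have h := norm_sub_sq_le_inner_of_inner_le (hQ.inner_le u (Q v) (hQ.mem v))
    (hQ.inner_le v (Q u) (hQ.mem u))
  have := real_inner_le_norm (u - v) (Q u - Q v)
  nlinarith [norm_nonneg (Q u - Q v), norm_nonneg (u - v)]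

theorem continuous (hQ : IsMetricProj S Q) : Continuous Q :=
  (LipschitzWith.of_dist_le_mul (K := 1) fun u v => by
    simpa [dist_eq_norm] using hQ.norm_sub_le u v).continuous

theorem eq_of_inner_le (hQ : IsMetricProj S Q) {x z : E} (hz : z ∈ S)
    (h : ∀ y ∈ S, ⟪x - z, y - z⟫ ≤ 0) : Q x = z := by
  have := norm_sub_sq_le_inner_of_inner_le (hQ.inner_le x z hz) (h (Q x) (hQ.mem x))
  rw [sub_self, inner_zero_left] at this
  exact sub_eq_zero.mp <| norm_eq_zero.mp <| (pow_eq_zero_iff two_ne_zero).mp <|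
    le_antisymm this (sq_nonneg _)

theorem apply_eq_self (hQ : IsMetricProj S Q) {x : E} (hx : x ∈ S) : Q x = x :=
  hQ.eq_of_inner_le hx fun y _ => by simp

theorem norm_apply_sub_le (hQ : IsMetricProj S Q) (x : E) {y : E} (hy : y ∈ S) :
    ‖Q x - y‖ ≤ ‖x - y‖ := by
  simpa [hQ.apply_eq_self hy] using hQ.norm_sub_le x y

theorem norm_apply_sub_self_le (hQ : IsMetricProj S Q) (x : E) {y : E} (hy : y ∈ S) :
    ‖Q x - x‖ ≤ ‖x - y‖ := by
  have h := hQ.inner_le x y hy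
  have : ‖x - Q x‖ ^ 2 ≤ ‖x - y‖ ^ 2 := by
    rw [show x - y = (x - Q x) - (y - Q x) by abel, norm_sub_sq_real (x - Q x)]
    nlinarith [sq_nonneg ‖y - Q x‖]
  rw [norm_sub_rev]
  exact (pow_le_pow_iff_left₀ (norm_nonneg _) (norm_nonneg _) two_ne_zero).mp this

end IsMetricProj

end Projection

section VariationalInequality

variable {E : Type*} [NormedAddCommGroup E] [InnerProductSpace ℝ E]

def IsPseudoMonotone (T : E → E) : Prop :=
  ∀ x y, 0 ≤ ⟪T x, y - x⟫ → 0 ≤ ⟪T y, y - x⟫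

def viSolutionSet (𝒳 : Set E) (T : E → E) : Set E :=
  {x | x ∈ 𝒳 ∧ ∀ y ∈ 𝒳, 0 ≤ ⟪T x, y - x⟫}

variable {𝒳 : Set E} {T Q : E → E} {L a : ℝ} {xs : E}

theorem IsPseudoMonotone.inner_sub_nonpos (hT : IsPseudoMonotone T)
    (hxs : xs ∈ viSolutionSet 𝒳 T) {y : E} (hy : y ∈ 𝒳) : ⟪T y, xs - y⟫ ≤ 0 := by
  have := hT xs y (hxs.2 y hy)
  rw [← neg_sub, inner_neg_right]
  linarith

theorem IsMetricProj.apply_sub_smul_eq (hQ : IsMetricProj 𝒳 Q)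
    (hxs : xs ∈ viSolutionSet 𝒳 T) (ha : 0 ≤ a) : Q (xs - a • T xs) = xs :=
  hQ.eq_of_inner_le hxs.1 fun y hy => by
    rw [sub_sub_cancel_left, inner_neg_left, real_inner_smul_left]
    nlinarith [hxs.2 y hy]

theorem IsMetricProj.norm_apply_sub_smul_sub_le (hQ : IsMetricProj 𝒳 Q)
    (hLip : ∀ x y, ‖T x - T y‖ ≤ L * ‖x - y‖) (hxs : xs ∈ viSolutionSet 𝒳 T) (ha : 0 ≤ a)
    (x v : E) : ‖Q (x - a • v) - xs‖ ≤ (1 + a * L) * ‖x - xs‖ + a * ‖v - T x‖ := by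
  calc ‖Q (x - a • v) - xs‖
      = ‖Q (x - a • v) - Q (xs - a • T xs)‖ := by rw [hQ.apply_sub_smul_eq hxs ha]
    _ ≤ ‖(x - xs) - a • (T x - T xs) - a • (v - T x)‖ := by
        convert hQ.norm_sub_le _ _ using 2; simp only [smul_sub]; abel
    _ ≤ ‖x - xs‖ + a * ‖T x - T xs‖ + a * ‖v - T x‖ := by
        refine (_root_.norm_sub_le _ _).trans ?_
        grw [_root_.norm_sub_le (x - xs)]
        simp only [norm_smul, Real.norm_of_nonneg ha, le_refl]
    _ ≤ (1 + a * L) * ‖x - xs‖ + a * ‖v - T x‖ := by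
        nlinarith [mul_le_mul_of_nonneg_left (hLip x xs) ha]

end VariationalInequality

section ForwardBackwardForward

theorem norm_sub_sq_le_of_lipschitz {E : Type*} [SeminormedAddCommGroup E] {T : E → E} {L : ℝ}
    (hLip : ∀ x y, ‖T x - T y‖ ≤ L * ‖x - y‖) (x y v w : E) :
    ‖v - w‖ ^ 2 ≤ 2 * L ^ 2 * ‖x - y‖ ^ 2 + 4 * ‖v - T x‖ ^ 2 + 4 * ‖w - T y‖ ^ 2 := by
  have h : ‖v - w‖ ≤ L * ‖x - y‖ + (‖v - T x‖ + ‖w - T y‖) := by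
    calc ‖v - w‖ = ‖(T x - T y) + ((v - T x) - (w - T y))‖ := by congr 1; abel
      _ ≤ ‖T x - T y‖ + (‖v - T x‖ + ‖w - T y‖) :=
        (norm_add_le _ _).trans (by gcongr; exact norm_sub_le _ _)
      _ ≤ _ := by grw [hLip x y]
  have h0 : 0 ≤ L * ‖x - y‖ := (norm_nonneg _).trans (hLip x y)
  nlinarith [norm_nonneg (v - w), norm_nonneg (v - T x), norm_nonneg (w - T y),
    sq_nonneg (L * ‖x - y‖ - ‖v - T x‖ - ‖w - T y‖), sq_nonneg (‖v - T x‖ - ‖w - T y‖)]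

variable {E : Type*} [NormedAddCommGroup E] [InnerProductSpace ℝ E]
variable {𝒳 : Set E} {T proj projS : E → E} {L a : ℝ}

theorem norm_fbf_step_sub_sq_le_s13 (hproj : IsMetricProj 𝒳 proj)
    (hLip : ∀ x y, ‖T x - T y‖ ≤ L * ‖x - y‖) (ha : 0 ≤ a) (x v w : E) {xs : E} (hxs : xs ∈ 𝒳)
    (hTy : ⟪T (proj (x - a • v)), xs - proj (x - a • v)⟫ ≤ 0) :
    ‖proj (x - a • v) + a • (v - w) - xs‖ ^ 2 ≤
      ‖x - xs‖ ^ 2 - (1 - 2 * L ^ 2 * a ^ 2) * ‖x - proj (x - a • v)‖ ^ 2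
        + 4 * a ^ 2 * ‖v - T x‖ ^ 2 + 4 * a ^ 2 * ‖w - T (proj (x - a • v))‖ ^ 2
        + 2 * a * ⟪w - T (proj (x - a • v)), xs - proj (x - a • v)⟫ := by
  set y := proj (x - a • v)
  have hy : ⟪x - y, xs - y⟫ ≤ a * ⟪v, xs - y⟫ := by
    have := hproj.inner_le (x - a • v) xs hxs
    rw [sub_right_comm, inner_sub_left, real_inner_smul_left] at this
    linarith
  have hexp : ‖y + a • (v - w) - xs‖ ^ 2 = ‖x - xs‖ ^ 2 - ‖x - y‖ ^ 2 + 2 * ⟪x - y, xs - y⟫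
      - 2 * a * (⟪v, xs - y⟫ - ⟪w, xs - y⟫) + a ^ 2 * ‖v - w‖ ^ 2 := by
    rw [show y + a • (v - w) - xs = a • (v - w) - (xs - y) by abel,
      show x - xs = (x - y) - (xs - y) by abel, norm_sub_sq_real, norm_sub_sq_real (x - y),
      norm_smul, real_inner_smul_left, inner_sub_left, Real.norm_eq_abs, mul_pow, sq_abs]
    ring
  have hw : ⟪w, xs - y⟫ = ⟪w - T y, xs - y⟫ + ⟪T y, xs - y⟫ := by rw [inner_sub_left]; ring
  rw [hexp, hw]
  nlinarith [mul_le_mul_of_nonneg_left (norm_sub_sq_le_of_lipschitz hLip x y v w) (sq_nonneg a),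
    mul_le_mul_of_nonneg_left hy ha, mul_nonpos_of_nonneg_of_nonpos ha hTy]

theorem norm_fbf_step_sub_sq_le_residual (hproj : IsMetricProj 𝒳 proj)
    (hLip : ∀ x y, ‖T x - T y‖ ≤ L * ‖x - y‖) (ha : 0 ≤ a) (hρ : 2 * L ^ 2 * a ^ 2 ≤ 1)
    (x v w : E) {xs : E} (hxs : xs ∈ 𝒳)
    (hTy : ⟪T (proj (x - a • v)), xs - proj (x - a • v)⟫ ≤ 0) :
    ‖proj (x - a • v) + a • (v - w) - xs‖ ^ 2 ≤
      ‖x - xs‖ ^ 2 - (1 - 2 * L ^ 2 * a ^ 2) / 2 * ‖x - proj (x - a • T x)‖ ^ 2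
        + (4 + (1 - 2 * L ^ 2 * a ^ 2)) * a ^ 2 * ‖v - T x‖ ^ 2
        + 4 * a ^ 2 * ‖w - T (proj (x - a • v))‖ ^ 2
        + 2 * a * ⟪w - T (proj (x - a • v)), xs - proj (x - a • v)⟫ := by
  have hr : ‖x - proj (x - a • T x)‖ ≤ ‖x - proj (x - a • v)‖ + a * ‖v - T x‖ := by
    calc ‖x - proj (x - a • T x)‖
        ≤ ‖x - proj (x - a • v)‖ + ‖proj (x - a • v) - proj (x - a • T x)‖ :=
          norm_sub_le_norm_sub_add_norm_sub _ _ _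
      _ ≤ ‖x - proj (x - a • v)‖ + ‖a • (v - T x)‖ := by
        grw [hproj.norm_sub_le]
        rw [sub_sub_sub_cancel_left, smul_sub, norm_sub_rev (a • T x)]
      _ = ‖x - proj (x - a • v)‖ + a * ‖v - T x‖ := by rw [norm_smul, Real.norm_of_nonneg ha]
  have hr2 : ‖x - proj (x - a • T x)‖ ^ 2 ≤
      2 * ‖x - proj (x - a • v)‖ ^ 2 + 2 * a ^ 2 * ‖v - T x‖ ^ 2 := by
    nlinarith [norm_nonneg (x - proj (x - a • T x)), norm_nonneg (v - T x),
      sq_nonneg (‖x - proj (x - a • v)‖ - a * ‖v - T x‖)]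
  nlinarith [norm_fbf_step_sub_sq_le_s13 hproj hLip ha x v w hxs hTy,
    mul_le_mul_of_nonneg_left hr2 (by linarith : 0 ≤ (1 - 2 * L ^ 2 * a ^ 2) / 2)]

theorem norm_projS_fbf_step_sub_sq_le (hproj : IsMetricProj 𝒳 proj)
    (hprojS : IsMetricProj (viSolutionSet 𝒳 T) projS) (hT : IsPseudoMonotone T)
    (hLip : ∀ x y, ‖T x - T y‖ ≤ L * ‖x - y‖) (ha : 0 ≤ a) (hρ : 2 * L ^ 2 * a ^ 2 ≤ 1)
    (x v w : E) :
    ‖projS (proj (x - a • v) + a • (v - w)) - (proj (x - a • v) + a • (v - w))‖ ^ 2 ≤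
      ‖projS x - x‖ ^ 2 - (1 - 2 * L ^ 2 * a ^ 2) / 2 * ‖x - proj (x - a • T x)‖ ^ 2
        + (4 + (1 - 2 * L ^ 2 * a ^ 2)) * a ^ 2 * ‖v - T x‖ ^ 2
        + 4 * a ^ 2 * ‖w - T (proj (x - a • v))‖ ^ 2
        + 2 * a * ⟪w - T (proj (x - a • v)), projS x - proj (x - a • v)⟫ := by
  have hV := hprojS.mem x
  have h := norm_fbf_step_sub_sq_le_residual hproj hLip ha hρ x v w hV.1
    (hT.inner_sub_nonpos hV (hproj.mem _))
  rw [norm_sub_rev x] at h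
  exact (pow_le_pow_left₀ (norm_nonneg _) (hprojS.norm_apply_sub_self_le _ hV) 2).trans h

end ForwardBackwardForward

theorem sq_le_two_mul_sq_add_two_mul_sq {t p q : ℝ} (ht : 0 ≤ t) (h : t ≤ p + q) :
    t ^ 2 ≤ 2 * p ^ 2 + 2 * q ^ 2 := by
  nlinarith [pow_le_pow_left₀ ht h 2, sq_nonneg (p - q)]

theorem sq_add_mul_le_two_mul_sq_max {θ c σ₀ s k D : ℝ} (hc : 0 ≤ c) (hσ₀ : 0 ≤ σ₀) (hk : 1 ≤ k)
    (hD : 0 ≤ D) (hθ0 : 0 ≤ θ) (hθ : θ ≤ c * max s σ₀) :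
    (θ + c * σ₀ * k * D) ^ 2 ≤ 2 * (c * max s σ₀ * k) ^ 2 * (1 + D ^ 2) := by
  have hM : c * σ₀ ≤ c * max s σ₀ := mul_le_mul_of_nonneg_left (le_max_right _ _) hc
  have hle : θ + c * σ₀ * k * D ≤ c * max s σ₀ * k + c * max s σ₀ * k * D := by
    nlinarith [mul_le_mul_of_nonneg_right hM (mul_nonneg (by linarith : (0 : ℝ) ≤ k) hD),
      mul_nonneg (mul_nonneg hc hσ₀) (by linarith : (0 : ℝ) ≤ k - 1)]
  nlinarith [sq_le_two_mul_sq_add_two_mul_sq (by positivity) hle]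

section Envelope

variable {Ω E : Type*} [MeasurableSpace Ω] {μ : Measure Ω} [SeminormedAddCommGroup E]

noncomputable def aeEnvelope (μ : Measure Ω) (h : Ω → ℝ) (K : Ω → E) (b : ℝ) (x : E) : ℝ≥0∞ :=
  essSup (fun ω => ENNReal.ofReal (h ω - b * ‖K ω - x‖)) μ

variable {h : Ω → ℝ} {K : Ω → E} {b : ℝ}

theorem aeEnvelope_le_add (hb : 0 ≤ b) (x y : E) :
    aeEnvelope μ h K b x ≤ aeEnvelope μ h K b y + ENNReal.ofReal (b * ‖x - y‖) := by
  refine essSup_le_of_ae_le _ ?_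
  filter_upwards [ENNReal.ae_le_essSup fun ω => ENNReal.ofReal (h ω - b * ‖K ω - y‖)] with ω hω
  calc ENNReal.ofReal (h ω - b * ‖K ω - x‖)
      ≤ ENNReal.ofReal ((h ω - b * ‖K ω - y‖) + b * ‖x - y‖) := by
        gcongr
        nlinarith [norm_sub_le_norm_sub_add_norm_sub (K ω) x y]
    _ ≤ ENNReal.ofReal (h ω - b * ‖K ω - y‖) + ENNReal.ofReal (b * ‖x - y‖) :=
        ENNReal.ofReal_add_le
    _ ≤ aeEnvelope μ h K b y + ENNReal.ofReal (b * ‖x - y‖) := by gcongr; exact hω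

theorem aeEnvelope_le_ofReal {x : E} {s : ℝ} (hx : ∀ᵐ ω ∂μ, h ω ≤ s + b * ‖K ω - x‖) :
    aeEnvelope μ h K b x ≤ ENNReal.ofReal s :=
  essSup_le_of_ae_le _ (hx.mono fun _ hω => ENNReal.ofReal_le_ofReal (by linarith))

theorem exists_lipschitz_ae_envelope [TopologicalSpace.SeparableSpace E] {S : Set E}
    (hS : S.Nonempty) (s : E → ℝ) (hb : 0 ≤ b)
    (hbd : ∀ x ∈ S, ∀ᵐ ω ∂μ, h ω ≤ s x + b * ‖K ω - x‖) :
    ∃ θ : E → ℝ, LipschitzWith b.toNNReal θ ∧ (∀ x, 0 ≤ θ x) ∧ (∀ x ∈ S, θ x ≤ max (s x) 0) ∧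
      ∀ᵐ ω ∂μ, ∀ x, h ω ≤ θ x + b * ‖K ω - x‖ := by
  obtain ⟨x₀, hx₀⟩ := hS
  have hfin : ∀ x, aeEnvelope μ h K b x ≠ ∞ := fun x =>
    ne_top_of_le_ne_top (by finiteness) ((aeEnvelope_le_add hb x x₀).trans
      (add_le_add_left (aeEnvelope_le_ofReal (hbd x₀ hx₀)) _))
  set θ := fun x => (aeEnvelope μ h K b x).toReal
  have hθ : LipschitzWith b.toNNReal θ := LipschitzWith.of_le_add_mul _ fun x y => by
    rw [Real.coe_toNNReal b hb]
    have := ENNReal.toReal_mono (ENNReal.add_ne_top.2 ⟨hfin y, ENNReal.ofReal_ne_top⟩)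
      (aeEnvelope_le_add (μ := μ) (h := h) (K := K) hb x y)
    rwa [ENNReal.toReal_add (hfin y) ENNReal.ofReal_ne_top, ENNReal.toReal_ofReal (by positivity),
      ← dist_eq_norm] at this
  refine ⟨θ, hθ, fun x => ENNReal.toReal_nonneg, fun x hx => ?_, ?_⟩
  · exact (ENNReal.toReal_mono ENNReal.ofReal_ne_top (aeEnvelope_le_ofReal (hbd x hx))).trans_eq
      ENNReal.toReal_ofReal'
  -- the bound holds on a dense sequence, hence everywhere since both sides are continuous in `x`
  obtain ⟨u, hu⟩ := TopologicalSpace.exists_dense_seq E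
  have hseq : ∀ᵐ ω ∂μ, ∀ n, h ω - b * ‖K ω - u n‖ ≤ θ (u n) := ae_all_iff.2 fun n =>
    (ENNReal.ae_le_essSup _).mono fun ω hω => (ENNReal.ofReal_le_iff_le_toReal (hfin (u n))).1 hω
  filter_upwards [hseq] with ω hω x
  have : h ω - b * ‖K ω - x‖ ≤ θ x :=
    hu.induction_on x (isClosed_le (by fun_prop) hθ.continuous) hω
  linarith

theorem exists_lipschitz_envelope_of_ae_rpow_le [TopologicalSpace.SeparableSpace E] {S : Set E}
    (hS : S.Nonempty) {g : Ω → ℝ} (hg : 0 ≤ᵐ[μ] g) (σ : E → ℝ) {c σ₀ : ℝ} (hc : 0 ≤ c)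
    (hσ₀ : 0 ≤ σ₀)
    (hbd : ∀ x ∈ S, ∀ᵐ ω ∂μ, g ω ^ ((1 : ℝ) / 2) ≤ c * (σ x + σ₀ * ‖K ω - x‖)) :
    ∃ θ : E → ℝ, LipschitzWith (c * σ₀).toNNReal θ ∧ (∀ x, 0 ≤ θ x) ∧
      (∀ x ∈ S, θ x ≤ c * max (σ x) σ₀) ∧
      ∀ᵐ ω ∂μ, ∀ x, g ω ≤ (θ x + c * σ₀ * ‖K ω - x‖) ^ 2 := by
  obtain ⟨θ, hθ, hθ0, hθS, hae⟩ := exists_lipschitz_ae_envelope hS (fun x => c * σ x)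
    (mul_nonneg hc hσ₀) fun x hx => (hbd x hx).mono fun ω hω => by linarith
  refine ⟨θ, hθ, hθ0, fun x hx => (hθS x hx).trans ?_, ?_⟩
  · exact max_le (mul_le_mul_of_nonneg_left (le_max_left _ _) hc)
      (mul_nonneg hc (hσ₀.trans (le_max_right _ _)))
  filter_upwards [hae, hg] with ω hω hgω x
  calc g ω = (g ω ^ ((1 : ℝ) / 2)) ^ 2 := by rw [← Real.sqrt_eq_rpow, Real.sq_sqrt hgω]
    _ ≤ (θ x + c * σ₀ * ‖K ω - x‖) ^ 2 := pow_le_pow_left₀ (Real.rpow_nonneg hgω _) (hω x) 2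

theorem ae_le_two_mul_sq_max_of_ae_rpow_le [TopologicalSpace.SeparableSpace E] {S : Set E}
    (hS : S.Nonempty) {g : Ω → ℝ} (hg : 0 ≤ᵐ[μ] g) {V : Ω → E} (hV : ∀ ω, V ω ∈ S)
    (σ : E → ℝ) {c σ₀ : ℝ} (hc : 0 ≤ c) (hσ₀ : 0 ≤ σ₀)
    (hbd : ∀ x ∈ S, ∀ᵐ ω ∂μ, g ω ^ ((1 : ℝ) / 2) ≤ c * (σ x + σ₀ * ‖K ω - x‖)) :
    ∀ᵐ ω ∂μ, g ω ≤ 2 * (c * max (σ (V ω)) σ₀) ^ 2 * (1 + ‖K ω - V ω‖ ^ 2) := by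
  obtain ⟨θ, -, hθ0, hθS, hae⟩ := exists_lipschitz_envelope_of_ae_rpow_le hS hg σ hc hσ₀ hbd
  filter_upwards [hae] with ω hω
  have h := sq_add_mul_le_two_mul_sq_max (k := 1) hc hσ₀ le_rfl (norm_nonneg (K ω - V ω))
    (hθ0 _) (hθS _ (hV ω))
  rw [mul_one, mul_one] at h
  exact (hω (V ω)).trans h

end Envelope

section ConditionalExpectation

variable {Ω E : Type*} {m₁ m₂ m0 : MeasurableSpace Ω} {μ : Measure Ω}

theorem MeasureTheory.MemLp.integrable_norm_sq [NormedAddCommGroup E] {f : Ω → E}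
    (hf : MemLp f 2 μ) : Integrable (fun ω => ‖f ω‖ ^ 2) μ :=
  (memLp_two_iff_integrable_sq_norm hf.1).1 hf

theorem MeasureTheory.MemLp.integrable_inner_s13 [NormedAddCommGroup E] [InnerProductSpace ℝ E]
    {f g : Ω → E} (hf : MemLp f 2 μ) (hg : MemLp g 2 μ) : Integrable (fun ω => ⟪f ω, g ω⟫) μ :=
  (hf.norm.integrable_mul hg.norm).mono (hf.1.inner hg.1)
    (ae_of_all _ fun ω => by simpa using abs_real_inner_le_norm (f ω) (g ω))

theorem MeasureTheory.MemLp.of_norm_le [NormedAddCommGroup E] {p : ℝ≥0∞} {f : Ω → E}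
    {g : Ω → ℝ} (hg : MemLp g p μ) (hf : AEStronglyMeasurable f μ) (hfg : ∀ ω, ‖f ω‖ ≤ g ω) :
    MemLp f p μ :=
  hg.of_le hf (ae_of_all _ fun ω => (hfg ω).trans (Real.le_norm_self _))

theorem LipschitzWith.memLp_comp [NormedAddCommGroup E] [IsFiniteMeasure μ] {p : ℝ≥0∞}
    {K : ℝ≥0} {θ : E → ℝ} (hθ : LipschitzWith K θ) {V : Ω → E} (hV : AEStronglyMeasurable V μ)
    {x₀ : E} (hVx : MemLp (fun ω => V ω - x₀) p μ) : MemLp (fun ω => θ (V ω)) p μ :=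
  ((memLp_const |θ x₀|).add (hVx.norm.const_mul K)).of_norm_le
    (hθ.continuous.comp_aestronglyMeasurable hV) fun ω => by
      have h := hθ.dist_le_mul (V ω) x₀
      rw [Real.dist_eq, dist_eq_norm] at h
      simp only [Pi.add_apply, Real.norm_eq_abs]
      linarith [abs_sub_abs_le_abs_sub (θ (V ω)) (θ x₀)]

theorem condExp_le_add_condExp [IsFiniteMeasure μ] (hm : m₁ ≤ m0) {f u g : Ω → ℝ}
    (hu : StronglyMeasurable[m₁] u) (hui : Integrable u μ) (hf : Integrable f μ)
    (hg : Integrable g μ) (hle : f ≤ᵐ[μ] u + g) : μ[f | m₁] ≤ᵐ[μ] u + μ[g | m₁] := by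
  have := isFiniteMeasure_trim (μ := μ) hm
  filter_upwards [condExp_mono hf (hui.add hg) hle, condExp_add hui hg m₁] with ω h1 h2
  rwa [h2, condExp_of_stronglyMeasurable hm hu hui] at h1

theorem condExp_le_add_condExp_of_condExp_le [IsFiniteMeasure μ] (hm : m₁ ≤ m₂)
    (hm₂ : m₂ ≤ m0) {f u g : Ω → ℝ} (hu : StronglyMeasurable[m₁] u) (hui : Integrable u μ)
    (hg : Integrable g μ) (hle : μ[f | m₂] ≤ᵐ[μ] u + g) : μ[f | m₁] ≤ᵐ[μ] u + μ[g | m₁] := by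
  have := isFiniteMeasure_trim (μ := μ) hm₂
  exact (condExp_condExp_of_le hm hm₂).symm.le.trans
    (condExp_le_add_condExp (hm.trans hm₂) hu hui integrable_condExp hg hle)

theorem condExp_le_of_le_add_of_condExp_eq_zero [IsFiniteMeasure μ] (hm : m₁ ≤ m0)
    {f u g₁ g₂ h : Ω → ℝ} {k₁ k₂ k₃ : ℝ} (hu : StronglyMeasurable[m₁] u) (hui : Integrable u μ)
    (hf : Integrable f μ) (hg₁ : Integrable g₁ μ) (hg₂ : Integrable g₂ μ) (hh : Integrable h μ)
    (hh0 : μ[h | m₁] =ᵐ[μ] 0) (hle : ∀ ω, f ω ≤ u ω + k₁ * g₁ ω + k₂ * g₂ ω + k₃ * h ω) :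
    ∀ᵐ ω ∂μ, μ[f | m₁] ω ≤ u ω + k₁ * μ[g₁ | m₁] ω + k₂ * μ[g₂ | m₁] ω := by
  have hg : Integrable (k₁ • g₁ + k₂ • g₂ + k₃ • h) μ :=
    ((hg₁.smul k₁).add (hg₂.smul k₂)).add (hh.smul k₃)
  filter_upwards [condExp_le_add_condExp hm hu hui hf hg (ae_of_all _ fun ω => by
      simpa [add_assoc] using hle ω),
    condExp_add ((hg₁.smul k₁).add (hg₂.smul k₂)) (hh.smul k₃) m₁,
    condExp_add (hg₁.smul k₁) (hg₂.smul k₂) m₁, condExp_smul k₁ g₁ m₁, condExp_smul k₂ g₂ m₁,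
    condExp_smul k₃ h m₁, hh0] with ω h1 h2 h3 h4 h5 h6 h7
  simp only [Pi.add_apply, Pi.smul_apply, smul_eq_mul, Pi.zero_apply] at h1 h2 h3 h4 h5 h6 h7
  rw [h2, h3, h4, h5, h6, h7] at h1
  linarith

theorem condExp_inner_eq_zero [NormedAddCommGroup E] [InnerProductSpace ℝ E] [CompleteSpace E]
    [IsFiniteMeasure μ] (hm : m₁ ≤ m₂) (hm₂ : m₂ ≤ m0) {Z G : Ω → E}
    (hG : StronglyMeasurable[m₂] G) (hZ : Integrable Z μ)
    (hZG : Integrable (fun ω => ⟪Z ω, G ω⟫) μ) (hZ0 : μ[Z | m₂] =ᵐ[μ] 0) :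
    μ[fun ω => ⟪Z ω, G ω⟫ | m₁] =ᵐ[μ] 0 := by
  have := isFiniteMeasure_trim (μ := μ) hm₂
  have hpull : μ[fun ω => ⟪Z ω, G ω⟫ | m₂] =ᵐ[μ] 0 := by
    change μ[fun ω => innerSL ℝ (Z ω) (G ω) | m₂] =ᵐ[μ] 0
    filter_upwards [condExp_bilin_of_stronglyMeasurable_right (innerSL ℝ) hG hZG hZ, hZ0]
      with ω h1 h2
    rw [h1, h2]
    simp
  exact (condExp_condExp_of_le hm hm₂).symm.trans ((condExp_congr_ae hpull).trans
    (by rw [condExp_zero]))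

end ConditionalExpectation

theorem fbf_noise_terms_le {ρ a L c σ₀ M D EW EZ : ℝ} (hρ : 0 ≤ ρ) (ha : 0 ≤ a) (hL : 0 ≤ L)
    (hc : 0 ≤ c) (hσ₀ : 0 ≤ σ₀) (hW : EW ≤ 2 * (c * M) ^ 2 * (1 + D ^ 2))
    (hZ : EZ ≤ 4 * (c * M * (1 + a * L)) ^ 2 * (1 + D ^ 2) + 2 * (c * σ₀ * a) ^ 2 * EW) :
    (4 + ρ) * a ^ 2 * EW + 4 * a ^ 2 * EZ ≤
      a ^ 2 * c ^ 2 * (2 * (4 + ρ) + 16 * (1 + a * L + a * σ₀ * c) ^ 2) * M ^ 2 * (1 + D ^ 2) := by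
  have hq : 0 ≤ a ^ 2 * c ^ 2 * M ^ 2 * (1 + D ^ 2) := by positivity
  have hcross : 0 ≤ (1 + a * L) * (a * σ₀ * c) := by positivity
  nlinarith [mul_le_mul_of_nonneg_left hW (by positivity : 0 ≤ (4 + ρ) * a ^ 2),
    mul_le_mul_of_nonneg_left hZ (by positivity : 0 ≤ 4 * a ^ 2),
    mul_le_mul_of_nonneg_left hW (by positivity : 0 ≤ 8 * a ^ 2 * (c * σ₀ * a) ^ 2),
    mul_nonneg hq hcross]

section Step

variable {Ω E : Type*} {m₁ m₂ m0 : MeasurableSpace Ω} {μ : Measure Ω}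
  [NormedAddCommGroup E] [InnerProductSpace ℝ E] [MeasurableSpace E]
  [BorelSpace E] [SecondCountableTopology E]
  {𝒳 : Set E} {proj projS T : E → E} {L a : ℝ} {X X' A B Y : Ω → E}

theorem IsMetricProj.memLp_comp_sub {S : Set E} {Q : E → E} (hQ : IsMetricProj S Q) {y : E}
    (hy : y ∈ S) (hX : Measurable X) (hXy : MemLp (fun ω => X ω - y) 2 μ) :
    MemLp (fun ω => Q (X ω) - y) 2 μ :=
  have := hQ.continuous
  hXy.norm.of_norm_le (by fun_prop) fun ω => hQ.norm_apply_sub_le _ hy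

theorem ae_condExp_norm_projS_fbf_step_sq_le [CompleteSpace E] [IsFiniteMeasure μ]
    (hm : m₁ ≤ m₂) (hm₂ : m₂ ≤ m0) (hproj : IsMetricProj 𝒳 proj)
    (hprojS : IsMetricProj (viSolutionSet 𝒳 T) projS) (hT : IsPseudoMonotone T)
    (hLip : ∀ x y, ‖T x - T y‖ ≤ L * ‖x - y‖) (ha : 0 ≤ a) (hρ : 2 * L ^ 2 * a ^ 2 ≤ 1)
    (hX : Measurable[m₁] X) (hA : Measurable[m₂] A) (hB : Measurable B)
    (hY : ∀ ω, Y ω = proj (X ω - a • A ω)) (hX' : ∀ ω, X' ω = Y ω + a • (A ω - B ω))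
    {xs : E} (hxs : xs ∈ viSolutionSet 𝒳 T) (hXi : Integrable (fun ω => ‖X ω - xs‖ ^ 2) μ)
    (hX'i : Integrable (fun ω => ‖X' ω - xs‖ ^ 2) μ)
    (hWi : Integrable (fun ω => ‖A ω - T (X ω)‖ ^ 2) μ)
    (hZi : Integrable (fun ω => ‖B ω - T (Y ω)‖ ^ 2) μ)
    (hZ0 : μ[fun ω => B ω - T (Y ω) | m₂] =ᵐ[μ] 0) :
    ∀ᵐ ω ∂μ, μ[fun ω' => ‖projS (X' ω') - X' ω'‖ ^ 2 | m₁] ω ≤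
      ‖projS (X ω) - X ω‖ ^ 2
        - (1 - 2 * L ^ 2 * a ^ 2) / 2 * ‖X ω - proj (X ω - a • T (X ω))‖ ^ 2
        + (4 + (1 - 2 * L ^ 2 * a ^ 2)) * a ^ 2 * μ[fun ω' => ‖A ω' - T (X ω')‖ ^ 2 | m₁] ω
        + 4 * a ^ 2 * μ[fun ω' => ‖B ω' - T (Y ω')‖ ^ 2 | m₁] ω := by
  have hTc : Continuous T := (LipschitzWith.of_dist_le' (K := L) fun x y => by
    simpa only [dist_eq_norm] using hLip x y).continuous
  have := hproj.continuous
  have := hprojS.continuous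
  have hX₂ : Measurable[m₂] X := hX.mono hm le_rfl
  have hY₂ : Measurable[m₂] Y := by rw [funext hY]; fun_prop
  have hX₀ : Measurable X := hX₂.mono hm₂ le_rfl
  have hY₀ : Measurable Y := hY₂.mono hm₂ le_rfl
  have hA₀ : Measurable A := hA.mono hm₂ le_rfl
  have hX'₀ : Measurable X' := by rw [funext hX']; fun_prop
  have mX : MemLp (fun ω => X ω - xs) 2 μ := (memLp_two_iff_integrable_sq_norm (by fun_prop)).2 hXi
  have mX' : MemLp (fun ω => X' ω - xs) 2 μ :=
    (memLp_two_iff_integrable_sq_norm (by fun_prop)).2 hX'i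
  have mW : MemLp (fun ω => A ω - T (X ω)) 2 μ :=
    (memLp_two_iff_integrable_sq_norm (by fun_prop)).2 hWi
  have mZ : MemLp (fun ω => B ω - T (Y ω)) 2 μ :=
    (memLp_two_iff_integrable_sq_norm (by fun_prop)).2 hZi
  have mV := hprojS.memLp_comp_sub hxs hX₀ mX
  have mY : MemLp (fun ω => Y ω - xs) 2 μ :=
    ((mX.norm.const_mul (1 + a * L)).add (mW.norm.const_mul a)).of_norm_le (by fun_prop)
      fun ω => hY ω ▸ hproj.norm_apply_sub_smul_sub_le hLip hxs ha (X ω) (A ω)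
  have mR : MemLp (fun ω => proj (X ω - a • T (X ω)) - xs) 2 μ :=
    (mX.norm.const_mul (1 + a * L)).of_norm_le (by fun_prop) fun ω => by
      simpa using hproj.norm_apply_sub_smul_sub_le hLip hxs ha (X ω) (T (X ω))
  have mVY : MemLp (fun ω => projS (X ω) - Y ω) 2 μ := by simpa [Pi.sub_def] using mV.sub mY
  have hu : Integrable (fun ω => ‖projS (X ω) - X ω‖ ^ 2
      - (1 - 2 * L ^ 2 * a ^ 2) / 2 * ‖X ω - proj (X ω - a • T (X ω))‖ ^ 2) μ := by
    simpa [Pi.sub_def] using (mV.sub mX).integrable_norm_sq.sub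
      ((mX.sub mR).integrable_norm_sq.const_mul ((1 - 2 * L ^ 2 * a ^ 2) / 2))
  have hf : Integrable (fun ω => ‖projS (X' ω) - X' ω‖ ^ 2) μ :=
    (mX'.norm.of_norm_le (by fun_prop) fun ω =>
      hprojS.norm_apply_sub_self_le _ hxs).integrable_norm_sq
  have hcross := mZ.integrable_inner_s13 mVY
  refine condExp_le_of_le_add_of_condExp_eq_zero (hm.trans hm₂) (k₃ := 2 * a)
    (Measurable.stronglyMeasurable (by fun_prop)) hu hf hWi hZi hcross
    (condExp_inner_eq_zero hm hm₂ (Measurable.stronglyMeasurable (by fun_prop))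
      (mZ.integrable one_le_two) hcross hZ0) fun ω => ?_
  rw [hX', hY]
  exact norm_projS_fbf_step_sub_sq_le hproj hprojS hT hLip ha hρ (X ω) (A ω) (B ω)

theorem ae_condExp_fbf_noise_le [IsFiniteMeasure μ] (hm : m₁ ≤ m₂) (hm₂ : m₂ ≤ m0)
    (hproj : IsMetricProj 𝒳 proj) (hprojS : IsMetricProj (viSolutionSet 𝒳 T) projS)
    (hLip : ∀ x y, ‖T x - T y‖ ≤ L * ‖x - y‖) (hL : 0 ≤ L) (ha : 0 ≤ a)
    (hX : Measurable[m₁] X) (hY : ∀ ω, Y ω = proj (X ω - a • A ω)) {xs : E}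
    (hxs : xs ∈ viSolutionSet 𝒳 T) (hXi : Integrable (fun ω => ‖X ω - xs‖ ^ 2) μ)
    (hWi : Integrable (fun ω => ‖A ω - T (X ω)‖ ^ 2) μ) {g : Ω → ℝ} (hg : 0 ≤ᵐ[μ] g)
    (σ : E → ℝ) {c σ₀ : ℝ} (hc : 0 ≤ c) (hσ₀ : 0 ≤ σ₀)
    (hbd : ∀ x ∈ viSolutionSet 𝒳 T, ∀ᵐ ω ∂μ,
      (μ[g | m₂] ω) ^ ((1 : ℝ) / 2) ≤ c * (σ x + σ₀ * ‖Y ω - x‖)) :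
    ∀ᵐ ω ∂μ, μ[g | m₁] ω ≤
      4 * (c * max (σ (projS (X ω))) σ₀ * (1 + a * L)) ^ 2 * (1 + ‖projS (X ω) - X ω‖ ^ 2)
        + 2 * (c * σ₀ * a) ^ 2 * μ[fun ω' => ‖A ω' - T (X ω')‖ ^ 2 | m₁] ω := by
  obtain ⟨θ, hθ, hθ0, hθS, hae⟩ := exists_lipschitz_envelope_of_ae_rpow_le ⟨xs, hxs⟩
    (condExp_nonneg hg) σ hc hσ₀ hbd
  have := hθ.continuous
  have := hprojS.continuous
  have hX₀ : Measurable X := hX.mono (hm.trans hm₂) le_rfl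
  have mX : MemLp (fun ω => X ω - xs) 2 μ := (memLp_two_iff_integrable_sq_norm (by fun_prop)).2 hXi
  have mV := hprojS.memLp_comp_sub hxs hX₀ mX
  have mθ : MemLp (fun ω => θ (projS (X ω))) 2 μ := hθ.memLp_comp (by fun_prop) mV
  set u := fun ω => 2 * (θ (projS (X ω)) + c * σ₀ * (1 + a * L) * ‖projS (X ω) - X ω‖) ^ 2
  have hu : StronglyMeasurable[m₁] u := Measurable.stronglyMeasurable (by fun_prop)
  have hui : Integrable u μ := by
    simpa [Pi.sub_def] using ((mθ.add (((mV.sub mX).norm).const_mul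
      (c * σ₀ * (1 + a * L)))).integrable_sq.const_mul 2)
  have hle : μ[g | m₂] ≤ᵐ[μ] u + fun ω => 2 * (c * σ₀ * a) ^ 2 * ‖A ω - T (X ω)‖ ^ 2 := by
    filter_upwards [hae] with ω hω
    have hcσ : 0 ≤ c * σ₀ := mul_nonneg hc hσ₀
    have hYV := hproj.norm_apply_sub_smul_sub_le hLip (hprojS.mem (X ω)) ha (X ω) (A ω)
    rw [← hY, norm_sub_rev (X ω)] at hYV
    refine (hω _).trans ((sq_le_two_mul_sq_add_two_mul_sq
      (p := θ (projS (X ω)) + c * σ₀ * (1 + a * L) * ‖projS (X ω) - X ω‖)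
      (q := c * σ₀ * a * ‖A ω - T (X ω)‖) (add_nonneg (hθ0 _) (by positivity))
      (by nlinarith)).trans_eq (by simp only [Pi.add_apply, u]; ring))
  filter_upwards [condExp_le_add_condExp_of_condExp_le hm hm₂ hu hui (hWi.const_mul _) hle,
    (condExp_smul (2 * (c * σ₀ * a) ^ 2) (fun ω => ‖A ω - T (X ω)‖ ^ 2) m₁ :
      μ[fun ω => 2 * (c * σ₀ * a) ^ 2 * ‖A ω - T (X ω)‖ ^ 2 | m₁] =ᵐ[μ]
        fun ω => 2 * (c * σ₀ * a) ^ 2 * μ[fun ω => ‖A ω - T (X ω)‖ ^ 2 | m₁] ω)] with ω h1 h2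
  rw [Pi.add_apply, h2] at h1
  have hu := sq_add_mul_le_two_mul_sq_max (k := 1 + a * L) hc hσ₀
    (by nlinarith [mul_nonneg ha hL]) (norm_nonneg (projS (X ω) - X ω)) (hθ0 _)
    (hθS _ (hprojS.mem (X ω)))
  simp only [u] at h1
  linarith

theorem ae_condExp_dist_sq_fbf_step_le [CompleteSpace E] [IsFiniteMeasure μ] (hm : m₁ ≤ m₂)
    (hm₂ : m₂ ≤ m0) (hproj : IsMetricProj 𝒳 proj)
    (hprojS : IsMetricProj (viSolutionSet 𝒳 T) projS) (hT : IsPseudoMonotone T)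
    (hLip : ∀ x y, ‖T x - T y‖ ≤ L * ‖x - y‖) (hL : 0 ≤ L) (ha : 0 ≤ a)
    (hρ : 2 * L ^ 2 * a ^ 2 ≤ 1) (hX : Measurable[m₁] X) (hA : Measurable[m₂] A)
    (hB : Measurable B) (hY : ∀ ω, Y ω = proj (X ω - a • A ω))
    (hX' : ∀ ω, X' ω = Y ω + a • (A ω - B ω)) {xs : E} (hxs : xs ∈ viSolutionSet 𝒳 T)
    (hXi : Integrable (fun ω => ‖X ω - xs‖ ^ 2) μ)
    (hX'i : Integrable (fun ω => ‖X' ω - xs‖ ^ 2) μ)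
    (hWi : Integrable (fun ω => ‖A ω - T (X ω)‖ ^ 2) μ)
    (hZi : Integrable (fun ω => ‖B ω - T (Y ω)‖ ^ 2) μ)
    (hZ0 : μ[fun ω => B ω - T (Y ω) | m₂] =ᵐ[μ] 0) (σ : E → ℝ) {c σ₀ : ℝ} (hc : 0 ≤ c)
    (hσ₀ : 0 ≤ σ₀)
    (hWbd : ∀ x ∈ viSolutionSet 𝒳 T, ∀ᵐ ω ∂μ,
      (μ[fun ω' => ‖A ω' - T (X ω')‖ ^ 2 | m₁] ω) ^ ((1 : ℝ) / 2) ≤ c * (σ x + σ₀ * ‖X ω - x‖))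
    (hZbd : ∀ x ∈ viSolutionSet 𝒳 T, ∀ᵐ ω ∂μ,
      (μ[fun ω' => ‖B ω' - T (Y ω')‖ ^ 2 | m₂] ω) ^ ((1 : ℝ) / 2) ≤ c * (σ x + σ₀ * ‖Y ω - x‖)) :
    ∀ᵐ ω ∂μ, μ[fun ω' => ‖projS (X' ω') - X' ω'‖ ^ 2 | m₁] ω ≤
      ‖projS (X ω) - X ω‖ ^ 2
        - (1 - 2 * L ^ 2 * a ^ 2) / 2 * ‖X ω - proj (X ω - a • T (X ω))‖ ^ 2
        + a ^ 2 * c ^ 2 * (2 * (4 + (1 - 2 * L ^ 2 * a ^ 2)) + 16 * (1 + a * L + a * σ₀ * c) ^ 2)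
          * max (σ (projS (X ω))) σ₀ ^ 2 * (1 + ‖projS (X ω) - X ω‖ ^ 2) := by
  have hnn : ∀ f : Ω → E, 0 ≤ᵐ[μ] fun ω => ‖f ω‖ ^ 2 := fun f => ae_of_all _ fun ω => by positivity
  filter_upwards [ae_condExp_norm_projS_fbf_step_sq_le hm hm₂ hproj hprojS hT hLip ha hρ hX hA hB
      hY hX' hxs hXi hX'i hWi hZi hZ0,
    ae_le_two_mul_sq_max_of_ae_rpow_le ⟨xs, hxs⟩ (condExp_nonneg (hnn _))
      (fun ω => hprojS.mem (X ω)) σ hc hσ₀ hWbd,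
    ae_condExp_fbf_noise_le hm hm₂ hproj hprojS hLip hL ha hX hY hxs hXi hWi (hnn _) σ hc hσ₀
      hZbd] with ω hstep hW hZ
  rw [norm_sub_rev (X ω)] at hW
  linarith [fbf_noise_terms_le (sub_nonneg.2 hρ) ha hL hc hσ₀ hW hZ]

end Step

theorem stmt_13_general {d : ℕ} {Ω : Type*} [mΩ : MeasurableSpace Ω]
    (μ : Measure Ω) [IsProbabilityMeasure μ]
    (𝒳 : Set (EuclideanSpace ℝ (Fin d)))
    (proj : EuclideanSpace ℝ (Fin d) → EuclideanSpace ℝ (Fin d))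
    (hproj_mem : ∀ x, proj x ∈ 𝒳)
    (hproj_char : ∀ x, ∀ y ∈ 𝒳, ⟪x - proj x, y - proj x⟫ ≤ 0)
    (T : EuclideanSpace ℝ (Fin d) → EuclideanSpace ℝ (Fin d))
    (L : ℝ) (hL : 0 < L)
    (hLip : ∀ x y, ‖T x - T y‖ ≤ L * ‖x - y‖)
    (hpm : ∀ x y, 0 ≤ ⟪T x, y - x⟫ → 0 ≤ ⟪T y, y - x⟫)
    -- the (nonempty, closed, convex) solution set and the projection onto it
    (Xstar : Set (EuclideanSpace ℝ (Fin d)))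
    (hXstar : Xstar = {x | x ∈ 𝒳 ∧ ∀ y ∈ 𝒳, 0 ≤ ⟪T x, y - x⟫})
    (projS : EuclideanSpace ℝ (Fin d) → EuclideanSpace ℝ (Fin d))
    (hprojS_mem : ∀ x, projS x ∈ Xstar)
    (hprojS_char : ∀ x, ∀ y ∈ Xstar, ⟪x - projS x, y - projS x⟫ ≤ 0)
    -- the local variance assumption
    (σ₀ : ℝ) (hσ₀ : 0 ≤ σ₀)
    (σ : EuclideanSpace ℝ (Fin d) → ℝ)
    -- step sizes and batch sizes
    (α : ℕ → ℝ) (hα : ∀ n, 0 < α n) (hαL : ∀ n, Real.sqrt 2 * L * α n < 1)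
    (mb : ℕ → ℕ)
    -- filtrations and adapted processes
    (𝓕 𝓕hat : ℕ → MeasurableSpace Ω)
    (h𝓕le : ∀ n, 𝓕 n ≤ 𝓕hat n)
    (h𝓕Ω : ∀ n, 𝓕hat n ≤ mΩ)
    (X Y A B : ℕ → Ω → EuclideanSpace ℝ (Fin d))
    (hXad : ∀ n, StronglyMeasurable[𝓕 n] (X n))
    (hAad : ∀ n, StronglyMeasurable[𝓕hat n] (A n))
    (hBad : ∀ n, StronglyMeasurable[𝓕 (n + 1)] (B n))
    -- the SFBF recursion
    (hY : ∀ n ω, Y n ω = proj (X n ω - α n • A n ω))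
    (hX : ∀ n ω, X (n + 1) ω = Y n ω + α n • (A n ω - B n ω))
    -- integrability
    (hXint : ∀ n, ∀ xs ∈ Xstar, Integrable (fun ω => ‖X n ω - xs‖ ^ 2) μ)
    (hWint : ∀ n, Integrable (fun ω => ‖A n ω - T (X n ω)‖ ^ 2) μ)
    (hZint : ∀ n, Integrable (fun ω => ‖B n ω - T (Y n ω)‖ ^ 2) μ)
    -- the oracle errors have zero conditional mean
    (hZ0 : ∀ n, condExp (𝓕hat n) μ (fun ω => B n ω - T (Y n ω)) =ᵐ[μ] 0)
    -- the conditional second-moment oracle bounds, with constant `C₂`, at every solution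
    (C₂ : ℝ) (hC₂ : 0 < C₂)
    (hWbd : ∀ n, ∀ xs ∈ Xstar, ∀ᵐ ω ∂μ,
      (condExp (𝓕 n) μ (fun ω' => ‖A n ω' - T (X n ω')‖ ^ 2) ω) ^ ((1 : ℝ) / 2)
        ≤ (C₂ / Real.sqrt (mb (n + 1))) * (σ xs + σ₀ * ‖X n ω - xs‖))
    (hZbd : ∀ n, ∀ xs ∈ Xstar, ∀ᵐ ω ∂μ,
      (condExp (𝓕hat n) μ (fun ω' => ‖B n ω' - T (Y n ω')‖ ^ 2) ω) ^ ((1 : ℝ) / 2)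
        ≤ (C₂ / Real.sqrt (mb (n + 1))) * (σ xs + σ₀ * ‖Y n ω - xs‖)) :
    ∀ n, ∀ᵐ ω ∂μ,
      condExp (𝓕 n) μ (fun ω' => ‖projS (X (n + 1) ω') - X (n + 1) ω'‖ ^ 2) ω
        ≤ ‖projS (X n ω) - X n ω‖ ^ 2
          - ((1 - 2 * L ^ 2 * (α n) ^ 2) / 2) *
              ‖X n ω - proj (X n ω - α n • T (X n ω))‖ ^ 2
          + (((α n) ^ 2 * C₂ ^ 2 *
                (2 * (4 + (1 - 2 * L ^ 2 * (α n) ^ 2)) +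
                  16 * (1 + α n * L + α n * σ₀ * (C₂ / Real.sqrt (mb (n + 1)))) ^ 2))
              * (max (σ (projS (X n ω))) σ₀) ^ 2 / (mb (n + 1))) *
            (1 + ‖projS (X n ω) - X n ω‖ ^ 2) := by
  intro n
  subst hXstar
  have hρ : 2 * L ^ 2 * α n ^ 2 ≤ 1 := by
    have h := hαL n
    have h0 : 0 ≤ Real.sqrt 2 * L * α n := by have := hα n; positivity
    nlinarith [Real.sq_sqrt (zero_le_two : (0 : ℝ) ≤ 2)]
  have hB : Measurable (B n) :=
    (hBad n).measurable.mono ((h𝓕le (n + 1)).trans (h𝓕Ω (n + 1))) le_rfl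
  have hxs := hprojS_mem 0
  filter_upwards [ae_condExp_dist_sq_fbf_step_le (h𝓕le n) (h𝓕Ω n) ⟨hproj_mem, hproj_char⟩
    ⟨hprojS_mem, hprojS_char⟩ hpm hLip hL.le (hα n).le hρ (hXad n).measurable (hAad n).measurable
    hB (hY n) (hX n) hxs (hXint n _ hxs) (hXint (n + 1) _ hxs) (hWint n) (hZint n) (hZ0 n) σ
    (div_nonneg hC₂.le (Real.sqrt_nonneg _)) hσ₀ (hWbd n) (hZbd n)] with ω hω
  refine hω.trans_eq ?_
  rw [div_pow, Real.sq_sqrt (Nat.cast_nonneg _)]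
  ring

/-- The stochastic quasi-Fejér inequality in terms of the distance to the solution set
(Proposition 4.5): `E[dist(X_{n+1},𝒳_*)² | F_n] ≤ dist(X_n,𝒳_*)² − (ρ_n/2)r_{α_n}(X_n)²
  + (κ_n σ̂(Π_{𝒳_*}(X_n))²/m_{n+1})(1 + dist(X_n,𝒳_*)²)` a.s. -/
theorem stmt_13 {d : ℕ} {Ω Ξ : Type*} [mΩ : MeasurableSpace Ω] [mΞ : MeasurableSpace Ξ]
    (μ : Measure Ω) [IsProbabilityMeasure μ]
    (P : Measure Ξ) [IsProbabilityMeasure P]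
    (𝒳 : Set (EuclideanSpace ℝ (Fin d)))
    (h𝒳ne : 𝒳.Nonempty) (h𝒳cl : IsClosed 𝒳) (h𝒳cv : Convex ℝ 𝒳)
    (proj : EuclideanSpace ℝ (Fin d) → EuclideanSpace ℝ (Fin d))
    (hproj_mem : ∀ x, proj x ∈ 𝒳)
    (hproj_char : ∀ x, ∀ y ∈ 𝒳, ⟪x - proj x, y - proj x⟫ ≤ 0)
    (F : EuclideanSpace ℝ (Fin d) → Ξ → EuclideanSpace ℝ (Fin d))
    (hFmeas : ∀ x, Measurable (F x))
    (T : EuclideanSpace ℝ (Fin d) → EuclideanSpace ℝ (Fin d))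
    (hT : ∀ x, T x = ∫ z, F x z ∂P)
    (hTint : ∀ x, Integrable (fun z => F x z) P)
    (L : ℝ) (hL : 0 < L)
    (hLip : ∀ x y, ‖T x - T y‖ ≤ L * ‖x - y‖)
    (hpm : ∀ x y, 0 ≤ ⟪T x, y - x⟫ → 0 ≤ ⟪T y, y - x⟫)
    -- the (nonempty, closed, convex) solution set and the projection onto it
    (Xstar : Set (EuclideanSpace ℝ (Fin d)))
    (hXstar : Xstar = {x | x ∈ 𝒳 ∧ ∀ y ∈ 𝒳, 0 ≤ ⟪T x, y - x⟫})
    (hXstar_ne : Xstar.Nonempty)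
    (projS : EuclideanSpace ℝ (Fin d) → EuclideanSpace ℝ (Fin d))
    (hprojS_mem : ∀ x, projS x ∈ Xstar)
    (hprojS_char : ∀ x, ∀ y ∈ Xstar, ⟪x - projS x, y - projS x⟫ ≤ 0)
    -- the local variance assumption
    (p σ₀ : ℝ) (hp : 2 ≤ p) (hσ₀ : 0 ≤ σ₀)
    (σ : EuclideanSpace ℝ (Fin d) → ℝ) (hσnonneg : ∀ xs ∈ Xstar, 0 ≤ σ xs)
    (hvar : ∀ x, ∀ xs ∈ Xstar,
      (∫ z, ‖F x z - T x‖ ^ p ∂P) ^ (1 / p) ≤ σ xs + σ₀ * ‖x - xs‖)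
    -- step sizes and batch sizes
    (α : ℕ → ℝ) (hα : ∀ n, 0 < α n) (hαL : ∀ n, Real.sqrt 2 * L * α n < 1)
    (mb : ℕ → ℕ) (hmb : ∀ n, 1 ≤ mb n)
    -- filtrations and adapted processes
    (𝓕 𝓕hat : ℕ → MeasurableSpace Ω)
    (h𝓕le : ∀ n, 𝓕 n ≤ 𝓕hat n) (h𝓕hatle : ∀ n, 𝓕hat n ≤ 𝓕 (n + 1))
    (h𝓕Ω : ∀ n, 𝓕hat n ≤ mΩ)
    (X Y A B : ℕ → Ω → EuclideanSpace ℝ (Fin d))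
    (hXad : ∀ n, StronglyMeasurable[𝓕 n] (X n))
    (hAad : ∀ n, StronglyMeasurable[𝓕hat n] (A n))
    (hYad : ∀ n, StronglyMeasurable[𝓕hat n] (Y n))
    (hBad : ∀ n, StronglyMeasurable[𝓕 (n + 1)] (B n))
    -- the SFBF recursion
    (hY : ∀ n ω, Y n ω = proj (X n ω - α n • A n ω))
    (hX : ∀ n ω, X (n + 1) ω = Y n ω + α n • (A n ω - B n ω))
    -- integrability
    (hXint : ∀ n, ∀ xs ∈ Xstar, Integrable (fun ω => ‖X n ω - xs‖ ^ 2) μ)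
    (hWint : ∀ n, Integrable (fun ω => ‖A n ω - T (X n ω)‖ ^ 2) μ)
    (hZint : ∀ n, Integrable (fun ω => ‖B n ω - T (Y n ω)‖ ^ 2) μ)
    (hAint : ∀ n, Integrable (A n) μ) (hBint : ∀ n, Integrable (B n) μ)
    (hTXint : ∀ n, Integrable (fun ω => T (X n ω)) μ)
    (hTYint : ∀ n, Integrable (fun ω => T (Y n ω)) μ)
    -- the oracle errors have zero conditional mean
    (hW0 : ∀ n, condExp (𝓕 n) μ (fun ω => A n ω - T (X n ω)) =ᵐ[μ] 0)
    (hZ0 : ∀ n, condExp (𝓕hat n) μ (fun ω => B n ω - T (Y n ω)) =ᵐ[μ] 0)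
    -- the conditional second-moment oracle bounds, with constant `C₂`, at every solution
    (C₂ : ℝ) (hC₂ : 0 < C₂)
    (hWbd : ∀ n, ∀ xs ∈ Xstar, ∀ᵐ ω ∂μ,
      (condExp (𝓕 n) μ (fun ω' => ‖A n ω' - T (X n ω')‖ ^ 2) ω) ^ ((1 : ℝ) / 2)
        ≤ (C₂ / Real.sqrt (mb (n + 1))) * (σ xs + σ₀ * ‖X n ω - xs‖))
    (hZbd : ∀ n, ∀ xs ∈ Xstar, ∀ᵐ ω ∂μ,
      (condExp (𝓕hat n) μ (fun ω' => ‖B n ω' - T (Y n ω')‖ ^ 2) ω) ^ ((1 : ℝ) / 2)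
        ≤ (C₂ / Real.sqrt (mb (n + 1))) * (σ xs + σ₀ * ‖Y n ω - xs‖)) :
    ∀ n, ∀ᵐ ω ∂μ,
      condExp (𝓕 n) μ (fun ω' => ‖projS (X (n + 1) ω') - X (n + 1) ω'‖ ^ 2) ω
        ≤ ‖projS (X n ω) - X n ω‖ ^ 2
          - ((1 - 2 * L ^ 2 * (α n) ^ 2) / 2) *
              ‖X n ω - proj (X n ω - α n • T (X n ω))‖ ^ 2
          + (((α n) ^ 2 * C₂ ^ 2 *
                (2 * (4 + (1 - 2 * L ^ 2 * (α n) ^ 2)) +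
                  16 * (1 + α n * L + α n * σ₀ * (C₂ / Real.sqrt (mb (n + 1)))) ^ 2))
              * (max (σ (projS (X n ω))) σ₀) ^ 2 / (mb (n + 1))) *
            (1 + ‖projS (X n ω) - X n ω‖ ^ 2) :=
  stmt_13_general (mΩ := mΩ) μ 𝒳 proj hproj_mem hproj_char T L hL hLip hpm Xstar hXstar projS
    hprojS_mem hprojS_char σ₀ hσ₀ σ α hα hαL mb 𝓕 𝓕hat h𝓕le h𝓕Ω X Y A B hXad hAad hBad hY hX hXint
    hWint hZint hZ0 C₂ hC₂ hWbd hZbd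
end

section
/- In the SFBF setup with constant step size α ∈ (0, 1/(√2 L)), fix x* ∈ 𝒳_* and let ρ = 1 − 2α²L², σ̂(x*) = max{σ(x*),σ₀}, a(x*) = σ̂(x*)² α² C₂² c₁. Choose φ ∈ (0,(√5−1)/2) and let n₀ be the first integer with Σ_{i ≥ n₀} 1/m_{i+1} ≤ φ/a(x*). Define Γ_n = Σ_{i=0}^{n} 1/m_{i+1}, Γ²_n = Σ_{i=0}^{n} 1/m_{i+1}², δ_n(x*) = ‖X_n − x*‖², H(x*,n₀,φ) = (1 + max_{0≤i≤n₀} E[δ_i(x*)])/(1 − φ − φ²), Λ_n(x*,φ) = (2/ρ)·(E[δ₀(x*)] + (1 + H(x*,n₀,φ))·(a(x*)Γ_n + a(x*)²Γ²_n)), Λ_∞(x*,φ) = sup_{n≥0} Λ_n(x*,φ), and for ε > 0 the stopping time N_ε = inf{n ≥ 0 : E[r_α(X_n)²] ≤ ε}. Then either N_ε = 0, or E[r_α(X_{N_ε})²] ≤ ε < Λ_∞(x*,φ)/N_ε. -/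
open MeasureTheory Finset
open scoped RealInnerProductSpace

/-!
Integrating the quasi-Fejér inequality turns it into a deterministic recursion
`D (n+1) ≤ D n - (ρ/2) R n + θ n (1 + D n)` for `D n = E‖X n - x*‖²`, `R n = E r_α(X n)²` and
`θ n = a/m_{n+1} + a²/m_{n+1}²` (`batchWeight a m n`). From `n₀` on the `θ n` add up to at most
`φ + φ² < 1`, so a discrete Gronwall argument bounds every `D n` by `H`. Telescoping then gives
`∑_{n < N} R n ≤ Λ (N-1) ≤ Λ_∞`, while each of the `N_ε` residuals before the stopping time
exceeds `ε`.
-/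

lemma two_mul_sq_lt_one_of_sqrt_two_mul_lt_one {x : ℝ} (hx : 0 ≤ x) (h : √2 * x < 1) :
    2 * x ^ 2 < 1 := by
  have h2 : √2 ^ 2 = 2 := Real.sq_sqrt (by norm_num)
  calc 2 * x ^ 2 = (√2 * x) ^ 2 := by rw [mul_pow, h2]
    _ < 1 := pow_lt_one₀ (by positivity) h two_ne_zero

lemma add_sq_lt_one_of_lt {x : ℝ} (hx : 0 ≤ x) (h : x < (√5 - 1) / 2) : x + x ^ 2 < 1 := by
  have h5 : √5 ^ 2 = 5 := Real.sq_sqrt (by norm_num)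
  nlinarith [Real.sqrt_nonneg 5]

lemma sum_add_sq_le_of_sum_le {ι : Type*} (s : Finset ι) {x : ι → ℝ} {c : ℝ}
    (hx : ∀ i ∈ s, 0 ≤ x i) (h : ∑ i ∈ s, x i ≤ c) :
    ∑ i ∈ s, (x i + x i ^ 2) ≤ c + c ^ 2 := by
  have hsq := sum_sq_le_sq_sum_of_nonneg hx
  have hc := pow_le_pow_left₀ (sum_nonneg hx) h 2
  rw [sum_add_distrib]
  linarith

lemma sum_Ico_le_tsum_nat_add {f : ℕ → ℝ} (hf : Summable f) (hf0 : ∀ n, 0 ≤ f n) (k n : ℕ) :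
    ∑ i ∈ Ico k n, f i ≤ ∑' i, f (k + i) := by
  have hk : Summable fun i => f (k + i) := by
    simpa only [add_comm k] using (summable_nat_add_iff k).2 hf
  rw [sum_Ico_eq_sum_range]
  exact hk.sum_le_tsum _ fun i _ => hf0 _

lemma integral_le_of_ae_condExp_le_sub_mul_add_mul {Ω : Type*} {m mΩ : MeasurableSpace Ω}
    {μ : Measure Ω} [IsProbabilityMeasure μ] (hm : m ≤ mΩ) {f g h : Ω → ℝ} (hg : Integrable g μ)
    (hh : Integrable h μ) {c k s t : ℝ}
    (hle : ∀ᵐ ω ∂μ, μ[f|m] ω ≤ g ω - c * h ω + k * (s * g ω + t)) :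
    ∫ ω, f ω ∂μ ≤ ∫ ω, g ω ∂μ - c * ∫ ω, h ω ∂μ + k * (s * ∫ ω, g ω ∂μ + t) := by
  have hgh : Integrable (fun ω => g ω - c * h ω) μ := hg.sub (hh.const_mul c)
  have hgt : Integrable (fun ω => s * g ω + t) μ := (hg.const_mul s).add (integrable_const t)
  have hint : Integrable (fun ω => g ω - c * h ω + k * (s * g ω + t)) μ :=
    hgh.add (hgt.const_mul k)
  rw [← integral_condExp hm]
  refine (integral_mono_ae integrable_condExp hint hle).trans_eq ?_
  rw [integral_add hgh (hgt.const_mul k), integral_sub hg (hh.const_mul c), integral_const_mul,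
    integral_const_mul, integral_add (hg.const_mul s) (integrable_const t), integral_const_mul,
    integral_const, probReal_univ, one_smul]

lemma quasiFejer_error_le {κ m D σs σ₀ α C₂ c₁ a : ℝ} (hσs : 0 ≤ σs) (hσ₀ : 0 ≤ σ₀)
    (hc₁ : 1 ≤ c₁) (hκ0 : 0 ≤ κ) (hm : 0 ≤ m) (hD : 0 ≤ D)
    (hκ : κ ≤ α ^ 2 * C₂ ^ 2 * c₁ * (1 + α ^ 2 * σ₀ ^ 2 * C₂ ^ 2 / m))
    (ha : a = (max σs σ₀) ^ 2 * α ^ 2 * C₂ ^ 2 * c₁) :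
    κ / m * (σ₀ ^ 2 * D + σs ^ 2) ≤ (a * m⁻¹ + a ^ 2 * (m ^ 2)⁻¹) * (1 + D) := by
  set σ := max σs σ₀
  have hσ₀σ : σ₀ ^ 2 ≤ σ ^ 2 := pow_le_pow_left₀ hσ₀ (le_max_right _ _) 2
  have hσsσ : σs ^ 2 ≤ σ ^ 2 := pow_le_pow_left₀ hσs (le_max_left _ _) 2
  have ha0 : 0 ≤ a := ha ▸ by positivity
  have hvar : σ₀ ^ 2 * D + σs ^ 2 ≤ σ ^ 2 * (1 + D) := by nlinarith
  have hσa : α ^ 2 * σ₀ ^ 2 * C₂ ^ 2 ≤ a := by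
    rw [ha]
    calc α ^ 2 * σ₀ ^ 2 * C₂ ^ 2 ≤ σ ^ 2 * α ^ 2 * C₂ ^ 2 * 1 := by nlinarith [sq_nonneg (α * C₂)]
      _ ≤ σ ^ 2 * α ^ 2 * C₂ ^ 2 * c₁ := by gcongr
  have hσκ : σ ^ 2 * κ ≤ a + a ^ 2 * m⁻¹ :=
    calc σ ^ 2 * κ ≤ σ ^ 2 * (α ^ 2 * C₂ ^ 2 * c₁ * (1 + α ^ 2 * σ₀ ^ 2 * C₂ ^ 2 / m)) := by
          gcongr
      _ = a + a * (α ^ 2 * σ₀ ^ 2 * C₂ ^ 2) * m⁻¹ := by rw [ha]; ring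
      _ ≤ a + a ^ 2 * m⁻¹ := by rw [sq a]; gcongr
  calc κ / m * (σ₀ ^ 2 * D + σs ^ 2) ≤ κ / m * (σ ^ 2 * (1 + D)) := by gcongr
    _ = σ ^ 2 * κ * m⁻¹ * (1 + D) := by ring
    _ ≤ (a + a ^ 2 * m⁻¹) * m⁻¹ * (1 + D) := by gcongr
    _ = (a * m⁻¹ + a ^ 2 * (m ^ 2)⁻¹) * (1 + D) := by ring

lemma mul_sum_range_le_of_le_sub_add {D R e : ℕ → ℝ} {c : ℝ} (hD : ∀ n, 0 ≤ D n)
    (hstep : ∀ n, D (n + 1) ≤ D n - c * R n + e n) (N : ℕ) :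
    c * ∑ n ∈ range N, R n ≤ D 0 + ∑ n ∈ range N, e n := by
  suffices D N + c * ∑ n ∈ range N, R n ≤ D 0 + ∑ n ∈ range N, e n by linarith [hD N]
  induction N with
  | zero => simp
  | succ N ih =>
    rw [sum_range_succ, sum_range_succ, mul_add]
    linarith [hstep N]

section Gronwall

variable {D θ : ℕ → ℝ} {n₀ : ℕ}

lemma one_add_mul_one_sub_sum_Ico_le (hD : ∀ n, 0 ≤ D n) (hθ : ∀ n, 0 ≤ θ n)
    (hstep : ∀ n, D (n + 1) ≤ D n + θ n * (1 + D n)) (hsum : ∀ n, ∑ i ∈ Ico n₀ n, θ i ≤ 1)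
    {n : ℕ} (hn : n₀ ≤ n) : (1 + D n) * (1 - ∑ i ∈ Ico n₀ n, θ i) ≤ 1 + D n₀ := by
  induction n, hn using Nat.le_induction with
  | base => simp
  | succ n hn ih =>
    set S := ∑ i ∈ Ico n₀ n, θ i
    have hS : 0 ≤ S := sum_nonneg fun i _ => hθ i
    have hS1 := hsum (n + 1)
    rw [sum_Ico_succ_top hn] at hS1 ⊢
    calc (1 + D (n + 1)) * (1 - (S + θ n))
        ≤ (1 + D n) * (1 + θ n) * (1 - (S + θ n)) := by
          gcongr
          linarith [hstep n, show (1 + D n) * (1 + θ n) = 1 + D n + θ n * (1 + D n) by ring]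
      _ = (1 + D n) * (1 - S) - (1 + D n) * (θ n * (S + θ n)) := by ring
      _ ≤ (1 + D n) * (1 - S) := by
          have := mul_nonneg (hθ n) (add_nonneg hS (hθ n))
          nlinarith [hD n]
      _ ≤ 1 + D n₀ := ih

lemma le_one_add_sup'_div_of_sum_Ico_le (hD : ∀ n, 0 ≤ D n) (hθ : ∀ n, 0 ≤ θ n)
    (hstep : ∀ n, D (n + 1) ≤ D n + θ n * (1 + D n)) {s : ℝ}
    (hsum : ∀ n, ∑ i ∈ Ico n₀ n, θ i ≤ s) (hs : s < 1) (n : ℕ) :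
    D n ≤ (1 + (range (n₀ + 1)).sup' nonempty_range_add_one D) / (1 - s) := by
  set M := (range (n₀ + 1)).sup' nonempty_range_add_one D
  have hs0 : 0 ≤ s := by simpa using hsum n₀
  have hM : ∀ i ≤ n₀, D i ≤ M := fun i hi => le_sup' D (mem_range.2 (Nat.lt_succ_of_le hi))
  rw [le_div_iff₀ (by linarith)]
  rcases le_total n n₀ with hn | hn
  · nlinarith [hM n hn, hD n]
  · have hG := one_add_mul_one_sub_sum_Ico_le hD hθ hstep (fun k => (hsum k).trans hs.le) hn
    nlinarith [hsum n, hD n, hM n₀ le_rfl]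

lemma sum_range_le_of_le_sub_mul_add_mul {R : ℕ → ℝ} {c s : ℝ} (hc : 0 < c)
    (hD : ∀ n, 0 ≤ D n) (hR : ∀ n, 0 ≤ R n) (hθ : ∀ n, 0 ≤ θ n)
    (hstep : ∀ n, D (n + 1) ≤ D n - c * R n + θ n * (1 + D n))
    (hsum : ∀ n, ∑ i ∈ Ico n₀ n, θ i ≤ s) (hs : s < 1) (N : ℕ) :
    ∑ n ∈ range N, R n ≤ c⁻¹ * (D 0 + (1 + (1 + (range (n₀ + 1)).sup' nonempty_range_add_one D)
      / (1 - s)) * ∑ n ∈ range N, θ n) := by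
  have hDH := le_one_add_sup'_div_of_sum_Ico_le hD hθ
    (fun n => by linarith [hstep n, mul_nonneg hc.le (hR n)]) hsum hs
  have hsum := mul_sum_range_le_of_le_sub_add hD (fun n => (hstep n).trans
    (add_le_add_right (mul_le_mul_of_nonneg_left (add_le_add_right (hDH n) 1) (hθ n)) _)) N
  rw [← sum_mul, mul_comm _ (1 + _)] at hsum
  rw [← div_eq_inv_mul, le_div_iff₀' hc]
  exact hsum

end Gronwall

lemma bddAbove_range_mul_add_mul_sum_range {θ : ℕ → ℝ} (hθ : ∀ n, 0 ≤ θ n) (hs : Summable θ)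
    (a b c : ℝ) : BddAbove (Set.range fun n => a * (c + b * ∑ i ∈ range (n + 1), θ i)) := by
  refine ⟨|a| * (|c| + |b| * ∑' i, θ i), Set.forall_mem_range.2 fun n => ?_⟩
  have hS : |∑ i ∈ range (n + 1), θ i| ≤ ∑' i, θ i := by
    rw [abs_of_nonneg (sum_nonneg fun i _ => hθ i)]
    exact hs.sum_le_tsum _ fun i _ => hθ i
  calc _ ≤ |a * (c + b * ∑ i ∈ range (n + 1), θ i)| := le_abs_self _
    _ ≤ |a| * (|c| + |b| * ∑' i, θ i) := by
      rw [abs_mul]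
      gcongr
      exact (abs_add_le _ _).trans (by rw [abs_mul]; gcongr)

section BatchWeight

variable {a : ℝ} {m : ℕ → ℕ}

noncomputable def batchWeight (a : ℝ) (m : ℕ → ℕ) (n : ℕ) : ℝ :=
  a * ((m (n + 1) : ℝ))⁻¹ + a ^ 2 * (((m (n + 1) : ℝ)) ^ 2)⁻¹

lemma batchWeight_nonneg (ha : 0 ≤ a) (n : ℕ) : 0 ≤ batchWeight a m n := by
  unfold batchWeight
  positivity

lemma sum_range_batchWeight (a : ℝ) (m : ℕ → ℕ) (N : ℕ) :
    ∑ n ∈ range N, batchWeight a m n =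
      a * ∑ n ∈ range N, ((m (n + 1) : ℝ))⁻¹
        + a ^ 2 * ∑ n ∈ range N, (((m (n + 1) : ℝ)) ^ 2)⁻¹ := by
  rw [mul_sum, mul_sum, ← sum_add_distrib]
  rfl

lemma summable_batchWeight (hm : Summable fun n => ((m n : ℝ))⁻¹) (a : ℝ) :
    Summable (batchWeight a m) := by
  have hu : Summable fun n => ((m (n + 1) : ℝ))⁻¹ := (summable_nat_add_iff 1).2 hm
  refine (hu.mul_left a).add <| (hu.mul_left (a ^ 2)).of_nonneg_of_le (fun n => by positivity)
    fun n => ?_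
  rw [← inv_pow]
  gcongr
  exact pow_le_of_le_one (by positivity) (Nat.cast_inv_le_one _) two_ne_zero

lemma sum_Ico_batchWeight_le (hm : Summable fun n => ((m n : ℝ))⁻¹) {φ : ℝ} (ha : 0 ≤ a)
    (hφ : 0 ≤ φ) {n₀ : ℕ} (htail : ∑' i, ((m (n₀ + i + 1) : ℝ))⁻¹ ≤ φ / a) (n : ℕ) :
    ∑ i ∈ Ico n₀ n, batchWeight a m i ≤ φ + φ ^ 2 := by
  have hsum := sum_Ico_le_tsum_nat_add ((summable_nat_add_iff 1).2 hm)
    (fun _ => by positivity) n₀ n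
  have ha_tail := mul_le_of_le_div₀ hφ ha htail
  calc ∑ i ∈ Ico n₀ n, batchWeight a m i
      = ∑ i ∈ Ico n₀ n, (a * ((m (i + 1) : ℝ))⁻¹ + (a * ((m (i + 1) : ℝ))⁻¹) ^ 2) :=
        sum_congr rfl fun i _ => by unfold batchWeight; ring
    _ ≤ φ + φ ^ 2 := sum_add_sq_le_of_sum_le _ (fun i _ => by positivity)
        (by rw [← mul_sum]; nlinarith)

end BatchWeight

lemma le_and_lt_div_of_eq_sInf {R : ℕ → ℝ} {ε B : ℝ} {N : ℕ} (hN : N = sInf {n | R n ≤ ε})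
    (hN0 : N ≠ 0) (hB : ∑ n ∈ range N, R n ≤ B) : R N ≤ ε ∧ ε < B / N := by
  have hne : {n | R n ≤ ε}.Nonempty := by
    by_contra h
    rw [Set.not_nonempty_iff_eq_empty.1 h, Nat.sInf_empty] at hN
    exact hN0 hN
  refine ⟨hN ▸ Nat.sInf_mem hne, ?_⟩
  have hlt : ∀ n ∈ range N, ε < R n := fun n hn =>
    not_le.1 (Nat.notMem_of_lt_sInf (hN ▸ mem_range.1 hn))
  have hNε := sum_lt_sum_of_nonempty (nonempty_range_iff.2 hN0) hlt
  rw [sum_const, card_range, nsmul_eq_mul] at hNε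
  rw [lt_div_iff₀ (by positivity)]
  linarith

theorem stmt_16_general {d : ℕ} {Ω : Type*} [mΩ : MeasurableSpace Ω]
    (μ : Measure Ω) [IsProbabilityMeasure μ]
    (proj : EuclideanSpace ℝ (Fin d) → EuclideanSpace ℝ (Fin d))
    (T : EuclideanSpace ℝ (Fin d) → EuclideanSpace ℝ (Fin d))
    (L : ℝ) (hL : 0 < L)
    (xs : EuclideanSpace ℝ (Fin d))
    -- constant step size and batch sizes
    (α : ℝ) (hα : 0 < α) (hαL : Real.sqrt 2 * L * α < 1)
    (mb : ℕ → ℕ)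
    (hmb_sum : Summable fun n => ((mb n : ℝ))⁻¹)
    -- filtration and adapted iterates
    (𝓕 : ℕ → MeasurableSpace Ω) (h𝓕Ω : ∀ n, 𝓕 n ≤ mΩ)
    (X : ℕ → Ω → EuclideanSpace ℝ (Fin d))
    (hXint : ∀ n, Integrable (fun ω => ‖X n ω - xs‖ ^ 2) μ)
    (hrint : ∀ n, Integrable (fun ω => ‖X n ω - proj (X n ω - α • T (X n ω))‖ ^ 2) μ)
    -- the variance parameters and the stochastic quasi-Fejér inequality
    (σs σ₀ C₂ c₁ : ℝ) (hσs : 0 ≤ σs) (hσ₀ : 0 ≤ σ₀) (hc₁ : 1 < c₁)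
    (κ : ℕ → ℝ) (hκ0 : ∀ n, 0 ≤ κ n)
    (hFejer : ∀ n, ∀ᵐ ω ∂μ,
      condExp (𝓕 n) μ (fun ω' => ‖X (n + 1) ω' - xs‖ ^ 2) ω
        ≤ ‖X n ω - xs‖ ^ 2
          - ((1 - 2 * L ^ 2 * α ^ 2) / 2) *
              ‖X n ω - proj (X n ω - α • T (X n ω))‖ ^ 2
          + (κ n / (mb (n + 1))) * (σ₀ ^ 2 * ‖X n ω - xs‖ ^ 2 + σs ^ 2))
    (hκ : ∀ n, κ n ≤ α ^ 2 * C₂ ^ 2 * c₁ * (1 + α ^ 2 * σ₀ ^ 2 * C₂ ^ 2 / (mb (n + 1))))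
    -- the constants of the rate estimate
    (ρ a φ : ℝ) (n₀ : ℕ)
    (hρ : ρ = 1 - 2 * α ^ 2 * L ^ 2)
    (ha : a = (max σs σ₀) ^ 2 * α ^ 2 * C₂ ^ 2 * c₁)
    (hφ : 0 < φ ∧ φ < (Real.sqrt 5 - 1) / 2)
    -- `n₀` is the first integer whose tail sum is at most `φ/a`
    (hn₀ : (∑' i : ℕ, ((mb (n₀ + i + 1) : ℝ))⁻¹) ≤ φ / a ∧
      ∀ k : ℕ, (∑' i : ℕ, ((mb (k + i + 1) : ℝ))⁻¹) ≤ φ / a → n₀ ≤ k)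
    (Γ Γsq Λ : ℕ → ℝ) (H Λinf : ℝ)
    (hΓ : ∀ n, Γ n = ∑ i ∈ Finset.range (n + 1), ((mb (i + 1) : ℝ))⁻¹)
    (hΓsq : ∀ n, Γsq n = ∑ i ∈ Finset.range (n + 1), (((mb (i + 1) : ℝ)) ^ 2)⁻¹)
    (hH : H = (1 + (Finset.range (n₀ + 1)).sup'
        (Finset.nonempty_range_iff.mpr (Nat.succ_ne_zero n₀))
        (fun i => ∫ ω, ‖X i ω - xs‖ ^ 2 ∂μ)) / (1 - φ - φ ^ 2))
    (hΛ : ∀ n, Λ n = (2 / ρ) *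
      ((∫ ω, ‖X 0 ω - xs‖ ^ 2 ∂μ) + (1 + H) * (a * Γ n + a ^ 2 * Γsq n)))
    (hΛinf : Λinf = ⨆ n, Λ n) :
    ∀ ε : ℝ, 0 < ε → ∀ Nε : ℕ,
      Nε = sInf {n : ℕ | ∫ ω, ‖X n ω - proj (X n ω - α • T (X n ω))‖ ^ 2 ∂μ ≤ ε} →
      (Nε = 0 ∨
        ((∫ ω, ‖X Nε ω - proj (X Nε ω - α • T (X Nε ω))‖ ^ 2 ∂μ) ≤ ε ∧
          ε < Λinf / (Nε : ℝ))) := by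
  intro ε _ Nε hNε
  rcases eq_or_ne Nε 0 with hN0 | hN0
  · exact Or.inl hN0
  right
  set D : ℕ → ℝ := fun n => ∫ ω, ‖X n ω - xs‖ ^ 2 ∂μ
  set R : ℕ → ℝ := fun n => ∫ ω, ‖X n ω - proj (X n ω - α • T (X n ω))‖ ^ 2 ∂μ
  have hD n : 0 ≤ D n := integral_nonneg fun ω => sq_nonneg _
  have hR n : 0 ≤ R n := integral_nonneg fun ω => sq_nonneg _
  have hρ0 : 0 < ρ := by
    rw [hρ, show 2 * α ^ 2 * L ^ 2 = 2 * (L * α) ^ 2 by ring, sub_pos]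
    exact two_mul_sq_lt_one_of_sqrt_two_mul_lt_one (by positivity) (by rwa [← mul_assoc])
  have ha0 : 0 ≤ a := ha ▸ by positivity
  have hstep n : D (n + 1) ≤ D n - ρ / 2 * R n + batchWeight a mb n * (1 + D n) := by
    have hint : D (n + 1) ≤ D n - (1 - 2 * L ^ 2 * α ^ 2) / 2 * R n + _ :=
      integral_le_of_ae_condExp_le_sub_mul_add_mul (h𝓕Ω n) (hXint n) (hrint n) (hFejer n)
    have herr : _ ≤ batchWeight a mb n * (1 + D n) :=
      quasiFejer_error_le hσs hσ₀ hc₁.le (hκ0 n) (Nat.cast_nonneg _) (hD n) (hκ n) ha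
    rw [hρ]
    linarith
  have hΛ_batchWeight n :
      Λ n = (ρ / 2)⁻¹ * (D 0 + (1 + H) * ∑ i ∈ range (n + 1), batchWeight a mb i) := by
    rw [hΛ, sum_range_batchWeight, ← hΓ, ← hΓsq, inv_div]
  obtain ⟨K, rfl⟩ := Nat.exists_eq_succ_of_ne_zero hN0
  refine le_and_lt_div_of_eq_sInf hNε hN0 ?_
  calc ∑ n ∈ range (K + 1), R n ≤ Λ K := by
        rw [hΛ_batchWeight, hH, sub_sub]
        exact sum_range_le_of_le_sub_mul_add_mul (half_pos hρ0) hD hR (batchWeight_nonneg ha0)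
          hstep (sum_Ico_batchWeight_le hmb_sum ha0 hφ.1.le hn₀.1)
          (add_sq_lt_one_of_lt hφ.1.le hφ.2) _
    _ ≤ Λinf := by
        rw [hΛinf, funext hΛ_batchWeight]
        exact le_ciSup (bddAbove_range_mul_add_mul_sum_range (batchWeight_nonneg ha0)
          (summable_batchWeight hmb_sum a) _ _ _) K

/-- `O(1/n)` convergence rate of the expected squared natural residual for SFBF with
constant step size (Theorem 5.3): either `N_ε = 0` or
`E[r_α(X_{N_ε})²] ≤ ε < Λ_∞(x*,φ)/N_ε`. -/
theorem stmt_16 {d : ℕ} {Ω : Type*} [mΩ : MeasurableSpace Ω]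
    (μ : Measure Ω) [IsProbabilityMeasure μ]
    (𝒳 : Set (EuclideanSpace ℝ (Fin d)))
    (h𝒳ne : 𝒳.Nonempty) (h𝒳cl : IsClosed 𝒳) (h𝒳cv : Convex ℝ 𝒳)
    (proj : EuclideanSpace ℝ (Fin d) → EuclideanSpace ℝ (Fin d))
    (hproj_mem : ∀ x, proj x ∈ 𝒳)
    (hproj_char : ∀ x, ∀ y ∈ 𝒳, ⟪x - proj x, y - proj x⟫ ≤ 0)
    (T : EuclideanSpace ℝ (Fin d) → EuclideanSpace ℝ (Fin d))
    (L : ℝ) (hL : 0 < L)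
    (hLip : ∀ x y, ‖T x - T y‖ ≤ L * ‖x - y‖)
    (hpm : ∀ x y, 0 ≤ ⟪T x, y - x⟫ → 0 ≤ ⟪T y, y - x⟫)
    (xs : EuclideanSpace ℝ (Fin d)) (hxs_mem : xs ∈ 𝒳)
    (hxs_sol : ∀ y ∈ 𝒳, 0 ≤ ⟪T xs, y - xs⟫)
    -- constant step size and batch sizes
    (α : ℝ) (hα : 0 < α) (hαL : Real.sqrt 2 * L * α < 1)
    (mb : ℕ → ℕ) (hmb : ∀ n, 1 ≤ mb n)
    (hmb_sum : Summable fun n => ((mb n : ℝ))⁻¹)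
    -- filtration and adapted iterates
    (𝓕 : ℕ → MeasurableSpace Ω) (h𝓕mono : ∀ n, 𝓕 n ≤ 𝓕 (n + 1)) (h𝓕Ω : ∀ n, 𝓕 n ≤ mΩ)
    (X : ℕ → Ω → EuclideanSpace ℝ (Fin d))
    (hXad : ∀ n, StronglyMeasurable[𝓕 n] (X n))
    (hXint : ∀ n, Integrable (fun ω => ‖X n ω - xs‖ ^ 2) μ)
    (hrint : ∀ n, Integrable (fun ω => ‖X n ω - proj (X n ω - α • T (X n ω))‖ ^ 2) μ)
    -- the variance parameters and the stochastic quasi-Fejér inequality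
    (σs σ₀ C₂ c₁ : ℝ) (hσs : 0 ≤ σs) (hσ₀ : 0 ≤ σ₀) (hC₂ : 0 < C₂) (hc₁ : 1 < c₁)
    (κ : ℕ → ℝ) (hκ0 : ∀ n, 0 ≤ κ n)
    (hFejer : ∀ n, ∀ᵐ ω ∂μ,
      condExp (𝓕 n) μ (fun ω' => ‖X (n + 1) ω' - xs‖ ^ 2) ω
        ≤ ‖X n ω - xs‖ ^ 2
          - ((1 - 2 * L ^ 2 * α ^ 2) / 2) *
              ‖X n ω - proj (X n ω - α • T (X n ω))‖ ^ 2
          + (κ n / (mb (n + 1))) * (σ₀ ^ 2 * ‖X n ω - xs‖ ^ 2 + σs ^ 2))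
    (hκ : ∀ n, κ n ≤ α ^ 2 * C₂ ^ 2 * c₁ * (1 + α ^ 2 * σ₀ ^ 2 * C₂ ^ 2 / (mb (n + 1))))
    -- the constants of the rate estimate
    (ρ a φ : ℝ) (n₀ : ℕ)
    (hρ : ρ = 1 - 2 * α ^ 2 * L ^ 2)
    (ha : a = (max σs σ₀) ^ 2 * α ^ 2 * C₂ ^ 2 * c₁)
    (hφ : 0 < φ ∧ φ < (Real.sqrt 5 - 1) / 2)
    -- `n₀` is the first integer whose tail sum is at most `φ/a`
    (hn₀ : (∑' i : ℕ, ((mb (n₀ + i + 1) : ℝ))⁻¹) ≤ φ / a ∧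
      ∀ k : ℕ, (∑' i : ℕ, ((mb (k + i + 1) : ℝ))⁻¹) ≤ φ / a → n₀ ≤ k)
    (Γ Γsq Λ : ℕ → ℝ) (H Λinf : ℝ)
    (hΓ : ∀ n, Γ n = ∑ i ∈ Finset.range (n + 1), ((mb (i + 1) : ℝ))⁻¹)
    (hΓsq : ∀ n, Γsq n = ∑ i ∈ Finset.range (n + 1), (((mb (i + 1) : ℝ)) ^ 2)⁻¹)
    (hH : H = (1 + (Finset.range (n₀ + 1)).sup'
        (Finset.nonempty_range_iff.mpr (Nat.succ_ne_zero n₀))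
        (fun i => ∫ ω, ‖X i ω - xs‖ ^ 2 ∂μ)) / (1 - φ - φ ^ 2))
    (hΛ : ∀ n, Λ n = (2 / ρ) *
      ((∫ ω, ‖X 0 ω - xs‖ ^ 2 ∂μ) + (1 + H) * (a * Γ n + a ^ 2 * Γsq n)))
    (hΛinf : Λinf = ⨆ n, Λ n) :
    ∀ ε : ℝ, 0 < ε → ∀ Nε : ℕ,
      Nε = sInf {n : ℕ | ∫ ω, ‖X n ω - proj (X n ω - α • T (X n ω))‖ ^ 2 ∂μ ≤ ε} →
      (Nε = 0 ∨
        ((∫ ω, ‖X Nε ω - proj (X Nε ω - α • T (X Nε ω))‖ ^ 2 ∂μ) ≤ ε ∧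
          ε < Λinf / (Nε : ℝ))) :=
  stmt_16_general (mΩ := mΩ) μ proj T L hL xs α hα hαL mb hmb_sum 𝓕 h𝓕Ω X hXint hrint σs σ₀ C₂ c₁
    hσs hσ₀ hc₁ κ hκ0 hFejer hκ ρ a φ n₀ hρ ha hφ hn₀ Γ Γsq Λ H Λinf hΓ hΓsq hH hΛ hΛinf
end
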